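/- arXiv:1811.06650 — 6 statements merged into one kernel-verified Lean document; each statement's English description precedes it below -/
import Mathlib

section
/- Let d ≥ 1, m > 2, κ > 0, let 𝔖 be a symmetric positive definite d×d real matrix, let s ∈ (0,∞)^d and x ∈ ℝ^d. Then the function θ ∈ ℝ^d ↦ x·θ − κ·((m−1)/m)·Σ_{j=1}^d |(𝔖(θ×s))_j|^{m/(m−1)} attains its maximum over ℝ^d, and the maximum value equals (1/(m κ^{m−1})) · Σ_{j=1}^d |(𝔖^{−1}(x/s))_j|^m. -/
/-!
Writing `w = 𝔖(θ×s)` and `z = 𝔖⁻¹(x/s)`, symmetry of `𝔖` gives `x·θ = z·w`, so the objective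
splits into the scalar problems `w ↦ z w − κ((m−1)/m)|w|^{m/(m−1)}`. Young's inequality for the
conjugate exponents `m/(m−1)` and `m`, applied to `|w|` and `|z|/κ`, bounds each of them by
`|z|^m/(m κ^{m−1})`, with equality at the signed power `w = (z/κ)^{(m−1)}`; as `θ ↦ 𝔖(θ×s)` is
onto, this `w` is attained.
-/

open Matrix Finset

noncomputable def signedRpow (y α : ℝ) : ℝ := SignType.sign y * |y| ^ α

lemma self_mul_signedRpow {α : ℝ} (hα : α + 1 ≠ 0) (y : ℝ) :
    y * signedRpow y α = |y| ^ (α + 1) := by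
  rw [signedRpow, ← mul_assoc, self_mul_sign, Real.rpow_add' (abs_nonneg y) hα, Real.rpow_one,
    mul_comm]

lemma abs_signedRpow {α : ℝ} (hα : α ≠ 0) (y : ℝ) : |signedRpow y α| = |y| ^ α := by
  rcases lt_trichotomy y 0 with hy | rfl | hy
  · simp [signedRpow, hy, Real.rpow_nonneg]
  · simp [signedRpow, Real.zero_rpow hα]
  · simp [signedRpow, hy, Real.rpow_nonneg]

section Young

variable {m κ : ℝ}

lemma mul_abs_div (hκ : 0 < κ) (z : ℝ) : κ * |z / κ| = |z| := by
  rw [abs_div, abs_of_pos hκ, mul_div_cancel₀ _ hκ.ne']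

lemma div_mul_abs_div_rpow (hκ : 0 < κ) (z : ℝ) :
    κ / m * |z / κ| ^ m = 1 / (m * κ ^ (m - 1)) * |z| ^ m := by
  rw [abs_div, abs_of_pos hκ, Real.div_rpow (abs_nonneg z) hκ.le, Real.rpow_sub_one hκ.ne']
  have : κ ^ m ≠ 0 := (Real.rpow_pos_of_pos hκ m).ne'
  field_simp

lemma young_inequality_scaled (hm : 1 < m) (hκ : 0 < κ) (z w : ℝ) :
    z * w - κ * ((m - 1) / m) * |w| ^ (m / (m - 1)) ≤ 1 / (m * κ ^ (m - 1)) * |z| ^ m := by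
  have hpq : (m / (m - 1)).HolderConjugate m := (Real.HolderConjugate.conjExponent hm).symm
  have young := Real.young_inequality_of_nonneg (abs_nonneg w) (abs_nonneg (z / κ)) hpq
  have hzw : z * w ≤ κ * (|w| * |z / κ|) := by
    rw [mul_left_comm, mul_abs_div hκ, ← abs_mul, mul_comm]
    exact le_abs_self _
  calc z * w - κ * ((m - 1) / m) * |w| ^ (m / (m - 1))
      ≤ κ * (|w| ^ (m / (m - 1)) / (m / (m - 1)) + |z / κ| ^ m / m)
          - κ * ((m - 1) / m) * |w| ^ (m / (m - 1)) := by
          linarith [mul_le_mul_of_nonneg_left young hκ.le]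
    _ = κ / m * |z / κ| ^ m := by rw [div_div_eq_mul_div]; ring
    _ = 1 / (m * κ ^ (m - 1)) * |z| ^ m := div_mul_abs_div_rpow hκ z

lemma young_inequality_scaled_eq (hm : 1 < m) (hκ : 0 < κ) (z : ℝ) :
    z * signedRpow (z / κ) (m - 1)
        - κ * ((m - 1) / m) * |signedRpow (z / κ) (m - 1)| ^ (m / (m - 1)) =
      1 / (m * κ ^ (m - 1)) * |z| ^ m := by
  have hm0 : m ≠ 0 := by positivity
  have hm1 : m - 1 ≠ 0 := sub_ne_zero.2 hm.ne'
  have hlin : z * signedRpow (z / κ) (m - 1) = κ * |z / κ| ^ m := by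
    calc z * signedRpow (z / κ) (m - 1) = κ * (z / κ * signedRpow (z / κ) (m - 1)) := by
          rw [← mul_assoc, mul_div_cancel₀ z hκ.ne']
      _ = κ * |z / κ| ^ m := by
          rw [self_mul_signedRpow (by rwa [sub_add_cancel]), sub_add_cancel]
  rw [hlin, abs_signedRpow hm1, ← Real.rpow_mul (abs_nonneg _), mul_div_cancel₀ _ hm1,
    ← div_mul_abs_div_rpow hκ]
  field_simp
  ring

end Young

theorem Matrix.IsSymm.inv_mulVec_dotProduct_mulVec {n R : Type*} [Fintype n] [DecidableEq n]
    [CommRing R] {S : Matrix n n R} (hS : S.IsSymm) (hdet : IsUnit S.det) (y u : n → R) :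
    S⁻¹ *ᵥ y ⬝ᵥ S *ᵥ u = y ⬝ᵥ u := by
  rw [dotProduct_mulVec, ← mulVec_transpose, hS.eq, mulVec_mulVec, mul_nonsing_inv S hdet,
    one_mulVec]

theorem stmt0_general (d : ℕ) (m κ : ℝ) (hm : 2 < m) (hκ : 0 < κ)
    (S : Matrix (Fin d) (Fin d) ℝ) (hS : S.PosDef)
    (s x : Fin d → ℝ) (hs : ∀ i, 0 < s i) :
    ∃ θ₀ : Fin d → ℝ,
      (∀ θ : Fin d → ℝ,
        (∑ i, x i * θ i) - κ * ((m - 1) / m) *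
            (∑ j, |S.mulVec (fun i => θ i * s i) j| ^ (m / (m - 1))) ≤
          (∑ i, x i * θ₀ i) - κ * ((m - 1) / m) *
            (∑ j, |S.mulVec (fun i => θ₀ i * s i) j| ^ (m / (m - 1)))) ∧
      (∑ i, x i * θ₀ i) - κ * ((m - 1) / m) *
          (∑ j, |S.mulVec (fun i => θ₀ i * s i) j| ^ (m / (m - 1))) =
        (1 / (m * κ ^ (m - 1))) * ∑ j, |S⁻¹.mulVec (fun i => x i / s i) j| ^ m := by
  have hm1 : 1 < m := by linarith
  have hSymm : S.IsSymm := isHermitian_iff_isSymm.1 hS.isHermitian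
  have hdet : IsUnit S.det := (isUnit_iff_isUnit_det S).1 hS.isUnit
  set z := S⁻¹ *ᵥ fun i => x i / s i
  have hobjective : ∀ θ : Fin d → ℝ,
      (∑ i, x i * θ i) - κ * ((m - 1) / m) *
          (∑ j, |S.mulVec (fun i => θ i * s i) j| ^ (m / (m - 1))) =
        ∑ j, (z j * (S *ᵥ fun i => θ i * s i) j
          - κ * ((m - 1) / m) * |(S *ᵥ fun i => θ i * s i) j| ^ (m / (m - 1))) := by
    intro θ
    have hlin : ∑ i, x i * θ i = z ⬝ᵥ S *ᵥ fun i => θ i * s i := by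
      rw [hSymm.inv_mulVec_dotProduct_mulVec hdet]
      exact sum_congr rfl fun i _ => by field_simp [(hs i).ne']
    rw [hlin, dotProduct, mul_sum, ← sum_sub_distrib]
  set θ₀ : Fin d → ℝ := fun i => (S⁻¹ *ᵥ fun j => signedRpow (z j / κ) (m - 1)) i / s i
  have hθ₀ : (S *ᵥ fun i => θ₀ i * s i) = fun j => signedRpow (z j / κ) (m - 1) := by
    simp only [θ₀, div_mul_cancel₀ _ (hs _).ne', mulVec_mulVec, mul_nonsing_inv S hdet,
      one_mulVec]
  have hmax : (∑ i, x i * θ₀ i) - κ * ((m - 1) / m) *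
        (∑ j, |S.mulVec (fun i => θ₀ i * s i) j| ^ (m / (m - 1))) =
      (1 / (m * κ ^ (m - 1))) * ∑ j, |z j| ^ m := by
    rw [hobjective, hθ₀, mul_sum]
    exact sum_congr rfl fun j _ => young_inequality_scaled_eq hm1 hκ (z j)
  refine ⟨θ₀, fun θ => ?_, hmax⟩
  rw [hmax, hobjective, mul_sum]
  exact sum_le_sum fun j _ => young_inequality_scaled hm1 hκ _ _

/-- The convex conjugate of the multiplicative price-impact trading cost:
the function `θ ↦ x·θ − κ((m−1)/m) Σ_j |(𝔖(θ×s))_j|^{m/(m−1)}` attains its maximum over `ℝ^d`,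
and the maximum value equals `(1/(m κ^{m−1})) Σ_j |(𝔖⁻¹(x/s))_j|^m`. -/
theorem stmt0 (d : ℕ) (hd : 1 ≤ d) (m κ : ℝ) (hm : 2 < m) (hκ : 0 < κ)
    (S : Matrix (Fin d) (Fin d) ℝ) (hS : S.PosDef)
    (s x : Fin d → ℝ) (hs : ∀ i, 0 < s i) :
    ∃ θ₀ : Fin d → ℝ,
      (∀ θ : Fin d → ℝ,
        (∑ i, x i * θ i) - κ * ((m - 1) / m) *
            (∑ j, |S.mulVec (fun i => θ i * s i) j| ^ (m / (m - 1))) ≤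
          (∑ i, x i * θ₀ i) - κ * ((m - 1) / m) *
            (∑ j, |S.mulVec (fun i => θ₀ i * s i) j| ^ (m / (m - 1)))) ∧
      (∑ i, x i * θ₀ i) - κ * ((m - 1) / m) *
          (∑ j, |S.mulVec (fun i => θ₀ i * s i) j| ^ (m / (m - 1))) =
        (1 / (m * κ ^ (m - 1))) * ∑ j, |S⁻¹.mulVec (fun i => x i / s i) j| ^ m :=
  stmt0_general d m κ hm hκ S hS s x hs
end

section
/- Let m > 2 and λ_m ∈ ℝ. Suppose φ : ℝ → ℝ is convex, twice continuously differentiable, satisfies φ''(x) = −x² + λ_m + m^{−m}(m−1)^{m−1} |φ'(x)|^m for every x ∈ ℝ, and lim_{x→+∞} φ'(x)/x^{2/m} = m(m−1)^{1/m−1}, lim_{x→−∞} φ'(x)/|x|^{2/m} = −m(m−1)^{1/m−1}. Then φ'' is bounded on ℝ. -/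
/-!
Write `p = φ'`, so that `p' = -x² + λ + c |p|^m` and, where `p > 0`,
`p'' = -2x + c m p^(m-1) p'`. At a point `x` far to the right with `p'(x) = 1` the ODE gives
`c p^m = 1 + x² - λ`, hence `c m p^(m-1) = m (1 + x² - λ) / p > 2x` because `p = o(x)`; so `p''(x) > 0`.
Therefore once `p' ≥ 1` at some large `x₀` it stays `≥ 1`, and `p` grows linearly, contradicting
`p(x) ~ L x^(2/m)` with `2/m < 1`. Thus `0 ≤ p' < 1` far to the right (convexity gives `p' ≥ 0`), the
reflection `x ↦ -p(-x)` gives the same far to the left, and `p'` is continuous in between.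
-/

open Filter Topology Set

lemma le_image_of_deriv_pos_of_eq {f f' : ℝ → ℝ} {a c : ℝ}
    (hf : ∀ x ≥ a, HasDerivAt f (f' x) x) (ha : c ≤ f a)
    (hlevel : ∀ x ≥ a, f x = c → 0 < f' x) {x : ℝ} (hx : a ≤ x) : c ≤ f x := by
  have key := image_le_of_deriv_right_lt_deriv_boundary (f := fun y => -f y)
    (f' := fun y => -f' y) (B := fun _ => -c) (B' := fun _ => 0)
    (fun y hy => (hf y hy.1).continuousAt.neg.continuousWithinAt)
    (fun y hy => (hf y hy.1).neg.hasDerivWithinAt) (neg_le_neg ha)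
    (fun _ => hasDerivAt_const _ _)
    (fun y hy hyc => neg_neg_of_pos (hlevel y hy.1 (neg_inj.mp hyc))) ⟨hx, le_rfl⟩
  exact neg_le_neg_iff.mp key

lemma tendsto_div_self_of_tendsto_div_rpow {p : ℝ → ℝ} {e L : ℝ} (he : e < 1)
    (h : Tendsto (fun x => p x / x ^ e) atTop (𝓝 L)) :
    Tendsto (fun x => p x / x) atTop (𝓝 0) := by
  have hdecay : Tendsto (fun x : ℝ => x ^ (e - 1)) atTop (𝓝 0) := by
    simpa using tendsto_rpow_neg_atTop (y := 1 - e) (by linarith)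
  refine (mul_zero L ▸ h.mul hdecay).congr' ?_
  filter_upwards [eventually_gt_atTop 0] with x hx
  rw [Real.rpow_sub_one hx.ne']
  field_simp [(Real.rpow_pos_of_pos hx e).ne']

lemma eventually_pos_of_tendsto_div_rpow {p : ℝ → ℝ} {e L : ℝ} (hL : 0 < L)
    (h : Tendsto (fun x => p x / x ^ e) atTop (𝓝 L)) : ∀ᶠ x in atTop, 0 < p x := by
  filter_upwards [h.eventually (eventually_gt_nhds hL), eventually_gt_atTop 0] with x hpx hx
  exact (div_pos_iff_of_pos_right (Real.rpow_pos_of_pos hx e)).mp hpx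

lemma deriv_neg_comp_neg (p : ℝ → ℝ) (x : ℝ) : deriv (fun y => -p (-y)) x = deriv p (-x) := by
  rw [deriv.fun_neg, deriv_comp_neg, neg_neg]

lemma Continuous.exists_forall_abs_le_of_eventually {f : ℝ → ℝ} (hf : Continuous f) {B : ℝ}
    (htop : ∀ᶠ x in atTop, |f x| ≤ B) (hbot : ∀ᶠ x in atBot, |f x| ≤ B) :
    ∃ C, ∀ x, |f x| ≤ C := by
  have hbdd : Bornology.IsBounded (range f) :=
    hf.isBounded_range_iff_isBigO_atTop_atBot.mpr
      ⟨.of_bound B (by simpa using htop), .of_bound B (by simpa using hbot)⟩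
  obtain ⟨C, hC⟩ := isBounded_iff_forall_norm_le.mp hbdd
  exact ⟨C, fun x => hC _ (mem_range_self x)⟩

section CorrectorODE

variable {p : ℝ → ℝ} {m c lam : ℝ}

lemma hasDerivAt_deriv_of_ode (hp : Differentiable ℝ p)
    (hODE : ∀ x, deriv p x = -x ^ 2 + lam + c * |p x| ^ m) {x : ℝ} (hpx : 0 < p x) :
    HasDerivAt (deriv p) (-2 * x + c * (deriv p x * m * p x ^ (m - 1))) x := by
  have hpow : HasDerivAt (fun y => |p y| ^ m) (deriv p x * m * p x ^ (m - 1)) x := by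
    refine ((hp x).hasDerivAt.rpow_const (.inl hpx.ne')).congr_of_eventuallyEq ?_
    filter_upwards [(hp x).continuousAt.eventually (lt_mem_nhds hpx)] with y hy
    rw [abs_of_pos hy]
  refine HasDerivAt.congr_of_eventuallyEq ?_ (Eventually.of_forall hODE)
  convert ((hasDerivAt_pow 2 x).fun_neg.add_const lam).fun_add (hpow.const_mul c) using 1
  norm_num

lemma ode_slope_pos_of_deriv_eq_one (hm : 0 < m)
    (hODE : ∀ x, deriv p x = -x ^ 2 + lam + c * |p x| ^ m) {x : ℝ} (hpx : 0 < p x)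
    (hsmall : p x ≤ m / 4 * x) (hx : 2 * (lam - 1) < x ^ 2) (h1 : deriv p x = 1) :
    0 < -2 * x + c * (deriv p x * m * p x ^ (m - 1)) := by
  have hx0 : 0 < x := pos_of_mul_pos_right (hpx.trans_le hsmall) (by positivity)
  have hpm : c * p x ^ m = 1 + x ^ 2 - lam := by
    have := hODE x
    rw [h1, abs_of_pos hpx] at this
    linarith
  have hslope : c * (deriv p x * m * p x ^ (m - 1)) = m * (1 + x ^ 2 - lam) / p x := by
    rw [h1, Real.rpow_sub_one hpx.ne', ← hpm]
    field_simp
  have hgrow : 2 * x < m * (1 + x ^ 2 - lam) / p x := by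
    rw [lt_div_iff₀ hpx]
    nlinarith [mul_le_mul_of_nonneg_left hsmall (by linarith : (0:ℝ) ≤ 2 * x)]
  linarith

lemma eventually_deriv_lt_one_of_ode (hm : 0 < m) (hp : Differentiable ℝ p)
    (hODE : ∀ x, deriv p x = -x ^ 2 + lam + c * |p x| ^ m)
    (hpos : ∀ᶠ x in atTop, 0 < p x) (hsub : Tendsto (fun x => p x / x) atTop (𝓝 0)) :
    ∀ᶠ x in atTop, deriv p x < 1 := by
  set ε := min (1 / 2) (m / 4)
  have hε : 0 < ε := by positivity
  have hsmall : ∀ᶠ x in atTop, p x ≤ ε * x := by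
    filter_upwards [hsub.eventually (eventually_lt_nhds hε), eventually_gt_atTop 0]
      with x hpx hx
    exact ((div_lt_iff₀ hx).mp hpx).le
  have hlarge : ∀ᶠ x : ℝ in atTop, 2 * (lam - 1) < x ^ 2 :=
    (tendsto_pow_atTop two_ne_zero).eventually (eventually_gt_atTop _)
  obtain ⟨R, hR⟩ := eventually_atTop.mp
    (hpos.and (hsmall.and (hlarge.and (eventually_gt_atTop 0))))
  have hlevel : ∀ x ≥ R, deriv p x = 1 → 0 < -2 * x + c * (deriv p x * m * p x ^ (m - 1)) :=
    fun x hx h1 => let ⟨hpx, hpε, hx2, hx0⟩ := hR x hx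
      ode_slope_pos_of_deriv_eq_one hm hODE hpx
        (hpε.trans (mul_le_mul_of_nonneg_right (min_le_right _ _) hx0.le)) hx2 h1
  refine eventually_atTop.mpr ⟨R, fun x₀ hx₀ => not_le.mp fun h1 => ?_⟩
  have hge : ∀ x ≥ x₀, 1 ≤ deriv p x := fun x hx =>
    le_image_of_deriv_pos_of_eq
      (fun y hy => hasDerivAt_deriv_of_ode hp hODE (hR y (hx₀.trans hy)).1)
      h1 (fun y hy => hlevel y (hx₀.trans hy)) hx
  -- At this `x`, the linear growth `p x ≥ p x₀ + (x - x₀)` beats `p x ≤ x / 2`.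
  set x := x₀ + 2 * |x₀ - p x₀| + 1
  have hxx₀ : x₀ ≤ x := by linarith [abs_nonneg (x₀ - p x₀)]
  have hlin : 1 * (x - x₀) ≤ p x - p x₀ :=
    (convex_Ici x₀).mul_sub_le_image_sub_of_le_deriv hp.continuous.continuousOn
      hp.differentiableOn (fun y hy => hge y (interior_subset hy)) x₀ self_mem_Ici x hxx₀ hxx₀
  obtain ⟨-, hpε, -, hx0⟩ := hR x (hx₀.trans hxx₀)
  have hx₀0 := (hR x₀ hx₀).2.2.2
  have : ε * x ≤ 1 / 2 * x := mul_le_mul_of_nonneg_right (min_le_left _ _) hx0.le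
  linarith [le_abs_self (x₀ - p x₀)]

end CorrectorODE

/-- The second derivative of the solution of the one-dimensional first corrector ODE is bounded. -/
theorem stmt1 (m lamm : ℝ) (hm : 2 < m) (φ : ℝ → ℝ)
    (hconv : ConvexOn ℝ Set.univ φ) (hC2 : ContDiff ℝ 2 φ)
    (hODE : ∀ x : ℝ, deriv (deriv φ) x =
      -x ^ 2 + lamm + m ^ (-m) * (m - 1) ^ (m - 1) * |deriv φ x| ^ m)
    (htop : Tendsto (fun x => deriv φ x / x ^ (2 / m)) atTop
      (𝓝 (m * (m - 1) ^ (1 / m - 1))))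
    (hbot : Tendsto (fun x => deriv φ x / |x| ^ (2 / m)) atBot
      (𝓝 (-(m * (m - 1) ^ (1 / m - 1))))) :
    ∃ C : ℝ, ∀ x : ℝ, |deriv (deriv φ) x| ≤ C := by
  have hm0 : 0 < m := by linarith
  have hm1 : 0 < m - 1 := by linarith
  have hL : 0 < m * (m - 1) ^ (1 / m - 1) := by positivity
  have he : 2 / m < 1 := (div_lt_one hm0).mpr (by linarith)
  obtain ⟨hφ, -, hφ'⟩ :=
    contDiff_succ_iff_deriv.mp (by exact_mod_cast hC2 : ContDiff ℝ ((1 : ℕ) + 1) φ)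
  have hp : Differentiable ℝ (deriv φ) := hφ'.differentiable one_ne_zero
  have hP0 : ∀ x, 0 ≤ deriv (deriv φ) x := fun x =>
    (monotoneOn_univ.mp (hconv.monotoneOn_deriv fun y _ => hφ y)).deriv_nonneg
  have hright : ∀ᶠ x in atTop, deriv (deriv φ) x < 1 :=
    eventually_deriv_lt_one_of_ode hm0 hp hODE (eventually_pos_of_tendsto_div_rpow hL htop)
      (tendsto_div_self_of_tendsto_div_rpow he htop)
  set q : ℝ → ℝ := fun x => -deriv φ (-x)
  have hqlim : Tendsto (fun x => q x / x ^ (2 / m)) atTop (𝓝 (m * (m - 1) ^ (1 / m - 1))) := by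
    refine (neg_neg (m * (m - 1) ^ (1 / m - 1)) ▸ (hbot.comp tendsto_neg_atTop_atBot).neg).congr' ?_
    filter_upwards [eventually_ge_atTop 0] with x hx
    simp [q, abs_of_nonneg hx, neg_div]
  have hleft : ∀ᶠ x in atTop, deriv q x < 1 :=
    eventually_deriv_lt_one_of_ode hm0 (by fun_prop)
      (fun x => by rw [deriv_neg_comp_neg, hODE, neg_sq, abs_neg])
      (eventually_pos_of_tendsto_div_rpow hL hqlim) (tendsto_div_self_of_tendsto_div_rpow he hqlim)
  refine (contDiff_one_iff_deriv.mp hφ').2.exists_forall_abs_le_of_eventually (B := 1) ?_ ?_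
  · filter_upwards [hright] with x hx
    exact (abs_of_nonneg (hP0 x)).trans_le hx.le
  · filter_upwards [tendsto_neg_atBot_atTop.eventually hleft] with x hx
    rw [deriv_neg_comp_neg, neg_neg] at hx
    exact (abs_of_nonneg (hP0 x)).trans_le hx.le
end

section
/- Let d ≥ 1, m > 2, m^* := 1/(3m−2), R > 0, κ > 0, λ_m ∈ ℝ, and let A be a real d×d matrix with A_{jj} > 0 for every j. Suppose φ : ℝ → ℝ is twice differentiable and satisfies φ''(y) = −y² + λ_m + m^{−m}(m−1)^{m−1} |φ'(y)|^m for every y ∈ ℝ. Define γ_j := (2 (m/(κ(m−1)))^{m−1} R^{3m−1} A_{jj}^{−m})^{m^*}, β_j := 2^{−4m^*} A_{jj}^{4mm^*−1} R^{−1−4m^*} (κ(m−1)/m)^{4(m−1)m^*}, and λ := λ_m Σ_{j=1}^d R/(2γ_j²). Then the function w(x) := Σ_{j=1}^d β_j φ(γ_j x_j) satisfies, for every x ∈ ℝ^d, (R/2)|x|² − (1/m) Σ_{j=1}^d κ^{1−m} |∂_j w(x)|^m + (1/(2R²)) Σ_{i,j=1}^d A_{ij} ∂_i∂_j w(x) =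 λ. -/
/-!
The function `w` is separable, so its Hessian is diagonal: only the entries `A_jj` enter, and the
equation splits into one identity per coordinate, in the variable `y = γ_j x_j`. Each of these is
the ODE for `φ` at `y` multiplied by `R / (2 γ²)`, because `γ = correctorScale m R κ a` and
`β = correctorAmplitude m R κ a` (that is, `γ_j` and `β_j` with `A_jj = a`) satisfy `a β γ⁴ = R³`
(the Hessian term against the quadratic one) and
`κ^(1-m) (β γ)^m = m · m^(-m) (m-1)^(m-1) · R / (2 γ²)` (the gradient term against the
nonlinearity of the ODE). Both relations are linear identities between logarithms.
-/

open Real Finset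

section Separable

variable {ι : Type*} [Fintype ι]

theorem hasFDerivAt_const_mul_comp_apply {ψ : ℝ → ℝ} {x : ι → ℝ} (b c : ℝ) (j : ι)
    (hψ : DifferentiableAt ℝ ψ (c * x j)) :
    HasFDerivAt (fun y : ι → ℝ => b * ψ (c * y j))
      ((b * c * deriv ψ (c * x j)) • (ContinuousLinearMap.proj j : (ι → ℝ) →L[ℝ] ℝ)) x := by
  have h := (hψ.hasDerivAt.comp_hasFDerivAt x
    ((hasFDerivAt_apply (𝕜 := ℝ) j x).const_mul c)).const_mul b
  refine h.congr_fderiv ?_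
  ext v
  simp only [FunLike.coe_smul, Pi.smul_apply, ContinuousLinearMap.proj_apply, smul_eq_mul]
  ring

variable [DecidableEq ι]

theorem fderiv_sum_const_mul_comp_apply_single {ψ : ℝ → ℝ} (hψ : Differentiable ℝ ψ)
    (b c : ι → ℝ) (x : ι → ℝ) (j : ι) :
    fderiv ℝ (fun y : ι → ℝ => ∑ k, b k * ψ (c k * y k)) x (Pi.single j 1)
      = b j * c j * deriv ψ (c j * x j) := by
  rw [(HasFDerivAt.fun_sum fun k _ =>
    hasFDerivAt_const_mul_comp_apply (b k) (c k) k (hψ _)).fderiv]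
  simp [Pi.single_apply]

theorem sum_mul_fderiv_fderiv_sum_const_mul_comp {ψ : ℝ → ℝ} (hψ : Differentiable ℝ ψ)
    (hψ' : Differentiable ℝ (deriv ψ)) (A : Matrix ι ι ℝ) (b c : ι → ℝ) (x : ι → ℝ) :
    ∑ i, ∑ j, A i j * fderiv ℝ (fun y => fderiv ℝ (fun y : ι → ℝ => ∑ k, b k * ψ (c k * y k)) y
        (Pi.single j 1)) x (Pi.single i 1)
      = ∑ j, A j j * (b j * c j ^ 2 * deriv (deriv ψ) (c j * x j)) := by
  have hpartial (i j : ι) : fderiv ℝ (fun y => fderiv ℝ (fun y : ι → ℝ => ∑ k, b k * ψ (c k * y k))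
      y (Pi.single j 1)) x (Pi.single i 1)
        = if i = j then b j * c j ^ 2 * deriv (deriv ψ) (c j * x j) else 0 := by
    simp only [fderiv_sum_const_mul_comp_apply_single hψ]
    rw [(hasFDerivAt_const_mul_comp_apply (b j * c j) (c j) j (hψ' _)).fderiv]
    by_cases hij : i = j
    · subst hij; simp [sq, mul_assoc]
    · simp [hij, Ne.symm hij]
  simp only [hpartial, mul_ite, mul_zero, sum_ite_eq, mem_univ, if_true]

end Separable

noncomputable def correctorScale (m R κ a : ℝ) : ℝ :=
  (2 * (m / (κ * (m - 1))) ^ (m - 1) * R ^ (3 * m - 1) * a ^ (-m)) ^ (1 / (3 * m - 2))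

noncomputable def correctorAmplitude (m R κ a : ℝ) : ℝ :=
  (2 : ℝ) ^ (-(4 * (1 / (3 * m - 2)))) * a ^ (4 * m * (1 / (3 * m - 2)) - 1) *
    R ^ (-(1 + 4 * (1 / (3 * m - 2)))) * (κ * (m - 1) / m) ^ (4 * (m - 1) * (1 / (3 * m - 2)))

section CorrectorConstants

variable {m R κ a : ℝ}

theorem correctorScale_pos (hm : 1 < m) (hR : 0 < R) (hκ : 0 < κ) (ha : 0 < a) :
    0 < correctorScale m R κ a := by
  have : 0 < m - 1 := sub_pos.2 hm
  unfold correctorScale; positivity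

theorem correctorAmplitude_pos (hm : 1 < m) (hR : 0 < R) (hκ : 0 < κ) (ha : 0 < a) :
    0 < correctorAmplitude m R κ a := by
  have : 0 < m - 1 := sub_pos.2 hm
  unfold correctorAmplitude; positivity

theorem log_correctorScale (hm : 1 < m) (hR : 0 < R) (hκ : 0 < κ) (ha : 0 < a) :
    (3 * m - 2) * log (correctorScale m R κ a)
      = log 2 + (m - 1) * (log m - log κ - log (m - 1)) + (3 * m - 1) * log R - m * log a := by
  have hm1 : 0 < m - 1 := sub_pos.2 hm
  have h32 : 3 * m - 2 ≠ 0 := by linarith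
  unfold correctorScale
  rw [log_rpow (by positivity), log_mul (by positivity) (by positivity),
    log_mul (by positivity) (by positivity), log_mul (by positivity) (by positivity),
    log_rpow (by positivity), log_rpow hR, log_rpow ha, log_div (by positivity) (by positivity),
    log_mul hκ.ne' hm1.ne']
  field_simp
  ring

theorem log_correctorAmplitude (hm : 1 < m) (hR : 0 < R) (hκ : 0 < κ) (ha : 0 < a) :
    (3 * m - 2) * log (correctorAmplitude m R κ a) = -4 * log 2 + (m + 2) * log a
      - (3 * m + 2) * log R - 4 * (m - 1) * (log m - log κ - log (m - 1)) := by
  have hm1 : 0 < m - 1 := sub_pos.2 hm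
  have h32 : 3 * m - 2 ≠ 0 := by linarith
  unfold correctorAmplitude
  rw [log_mul (by positivity) (by positivity), log_mul (by positivity) (by positivity),
    log_mul (by positivity) (by positivity), log_rpow two_pos, log_rpow ha, log_rpow hR,
    log_rpow (by positivity), log_div (by positivity) (by positivity), log_mul hκ.ne' hm1.ne']
  field_simp
  ring

theorem mul_correctorAmplitude_mul_correctorScale_pow_four (hm : 1 < m) (hR : 0 < R)
    (hκ : 0 < κ) (ha : 0 < a) :
    a * correctorAmplitude m R κ a * correctorScale m R κ a ^ 4 = R ^ 3 := by
  have hβ := correctorAmplitude_pos hm hR hκ ha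
  have hγ := correctorScale_pos hm hR hκ ha
  have h32 : 3 * m - 2 ≠ 0 := by linarith
  refine log_injOn_pos (Set.mem_Ioi.2 (by positivity)) (Set.mem_Ioi.2 (by positivity)) ?_
  rw [log_mul (by positivity) (by positivity), log_mul ha.ne' hβ.ne', log_pow, log_pow]
  refine mul_left_cancel₀ h32 ?_
  linear_combination log_correctorAmplitude hm hR hκ ha + 4 * log_correctorScale hm hR hκ ha

theorem rpow_one_sub_mul_rpow_correctorAmplitude_mul_correctorScale (hm : 1 < m) (hR : 0 < R)
    (hκ : 0 < κ) (ha : 0 < a) :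
    κ ^ (1 - m) * (correctorAmplitude m R κ a * correctorScale m R κ a) ^ m
      = m * (m ^ (-m) * (m - 1) ^ (m - 1)) * (R / (2 * correctorScale m R κ a ^ 2)) := by
  have hm0 : 0 < m := by linarith
  have hm1 : 0 < m - 1 := sub_pos.2 hm
  have hβ := correctorAmplitude_pos hm hR hκ ha
  have hγ := correctorScale_pos hm hR hκ ha
  have h32 : 3 * m - 2 ≠ 0 := by linarith
  refine log_injOn_pos (Set.mem_Ioi.2 (by positivity)) (Set.mem_Ioi.2 (by positivity)) ?_
  rw [log_mul (by positivity) (by positivity), log_rpow hκ, log_rpow (by positivity),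
    log_mul hβ.ne' hγ.ne', log_mul (by positivity) (by positivity),
    log_mul hm0.ne' (by positivity), log_mul (by positivity) (by positivity), log_rpow hm0,
    log_rpow hm1, log_div hR.ne' (by positivity), log_mul two_ne_zero (by positivity), log_pow]
  refine mul_left_cancel₀ h32 ?_
  linear_combination
    m * log_correctorAmplitude hm hR hκ ha + (m + 2) * log_correctorScale hm hR hκ ha

theorem corrector_coordinate_eq (hm : 1 < m) (hR : 0 < R) (hκ : 0 < κ) (ha : 0 < a)
    (x lamm p : ℝ) :
    R / 2 * x ^ 2 - 1 / m * (κ ^ (1 - m) *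
        |correctorAmplitude m R κ a * correctorScale m R κ a * p| ^ m)
      + 1 / (2 * R ^ 2) * (a * (correctorAmplitude m R κ a * correctorScale m R κ a ^ 2 *
        (-(correctorScale m R κ a * x) ^ 2 + lamm + m ^ (-m) * (m - 1) ^ (m - 1) * |p| ^ m)))
      = lamm * (R / (2 * correctorScale m R κ a ^ 2)) := by
  have hβ := correctorAmplitude_pos hm hR hκ ha
  have hγ := correctorScale_pos hm hR hκ ha
  have hm0 : 0 < m := by linarith
  rw [abs_mul, abs_of_pos (mul_pos hβ hγ), mul_rpow (mul_pos hβ hγ).le (abs_nonneg p),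
    ← mul_assoc (κ ^ (1 - m)),
    rpow_one_sub_mul_rpow_correctorAmplitude_mul_correctorScale hm hR hκ ha]
  field_simp
  linear_combination (-(correctorScale m R κ a * x) ^ 2 + lamm
    + m ^ (-m) * (m - 1) ^ (m - 1) * |p| ^ m) *
      mul_correctorAmplitude_mul_correctorScale_pow_four hm hR hκ ha

end CorrectorConstants

theorem stmt3_general (d : ℕ) (m R κ lamm : ℝ) (hm : 2 < m) (hR : 0 < R) (hκ : 0 < κ)
    (A : Matrix (Fin d) (Fin d) ℝ) (hA : ∀ j, 0 < A j j)
    (φ : ℝ → ℝ) (hφ : Differentiable ℝ φ) (hφ' : Differentiable ℝ (deriv φ))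
    (hODE : ∀ y : ℝ, deriv (deriv φ) y =
      -y ^ 2 + lamm + m ^ (-m) * (m - 1) ^ (m - 1) * |deriv φ y| ^ m) :
    let mstar : ℝ := 1 / (3 * m - 2)
    let γ : Fin d → ℝ := fun j =>
      (2 * (m / (κ * (m - 1))) ^ (m - 1) * R ^ (3 * m - 1) * A j j ^ (-m)) ^ mstar
    let β : Fin d → ℝ := fun j =>
      (2 : ℝ) ^ (-(4 * mstar)) * A j j ^ (4 * m * mstar - 1) * R ^ (-(1 + 4 * mstar)) *
        (κ * (m - 1) / m) ^ (4 * (m - 1) * mstar)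
    let lam : ℝ := lamm * ∑ j, R / (2 * γ j ^ 2)
    let w : (Fin d → ℝ) → ℝ := fun x => ∑ j, β j * φ (γ j * x j)
    ∀ x : Fin d → ℝ,
      R / 2 * (∑ i, x i ^ 2)
        - (1 / m) * ∑ j, κ ^ (1 - m) * |fderiv ℝ w x (Pi.single j 1)| ^ m
        + (1 / (2 * R ^ 2)) *
            ∑ i, ∑ j, A i j *
              fderiv ℝ (fun y => fderiv ℝ w y (Pi.single j 1)) x (Pi.single i 1)
        = lam := by
  intro mstar γ β lam w x
  rw [sum_mul_fderiv_fderiv_sum_const_mul_comp hφ hφ' A β γ x]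
  simp only [w, lam, fderiv_sum_const_mul_comp_apply_single hφ]
  rw [mul_sum, mul_sum, mul_sum, mul_sum, ← sum_sub_distrib, ← sum_add_distrib]
  refine sum_congr rfl fun j _ => ?_
  rw [hODE]
  exact corrector_coordinate_eq (by linarith) hR hκ (hA j) (x j) lamm (deriv φ (γ j * x j))

/-- Verification that the separable function `w(x) = Σ_j β_j φ(γ_j x_j)` built from the
one-dimensional first corrector ODE solves the multidimensional reduced first corrector
equation. -/
theorem stmt3 (d : ℕ) (hd : 1 ≤ d) (m R κ lamm : ℝ) (hm : 2 < m) (hR : 0 < R) (hκ : 0 < κ)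
    (A : Matrix (Fin d) (Fin d) ℝ) (hA : ∀ j, 0 < A j j)
    (φ : ℝ → ℝ) (hφ : Differentiable ℝ φ) (hφ' : Differentiable ℝ (deriv φ))
    (hODE : ∀ y : ℝ, deriv (deriv φ) y =
      -y ^ 2 + lamm + m ^ (-m) * (m - 1) ^ (m - 1) * |deriv φ y| ^ m) :
    let mstar : ℝ := 1 / (3 * m - 2)
    let γ : Fin d → ℝ := fun j =>
      (2 * (m / (κ * (m - 1))) ^ (m - 1) * R ^ (3 * m - 1) * A j j ^ (-m)) ^ mstar
    let β : Fin d → ℝ := fun j =>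
      (2 : ℝ) ^ (-(4 * mstar)) * A j j ^ (4 * m * mstar - 1) * R ^ (-(1 + 4 * mstar)) *
        (κ * (m - 1) / m) ^ (4 * (m - 1) * mstar)
    let lam : ℝ := lamm * ∑ j, R / (2 * γ j ^ 2)
    let w : (Fin d → ℝ) → ℝ := fun x => ∑ j, β j * φ (γ j * x j)
    ∀ x : Fin d → ℝ,
      R / 2 * (∑ i, x i ^ 2)
        - (1 / m) * ∑ j, κ ^ (1 - m) * |fderiv ℝ w x (Pi.single j 1)| ^ m
        + (1 / (2 * R ^ 2)) *
            ∑ i, ∑ j, A i j *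
              fderiv ℝ (fun y => fderiv ℝ w y (Pi.single j 1)) x (Pi.single i 1)
        = lam :=
  stmt3_general d m R κ lamm hm hR hκ A hA φ hφ hφ' hODE
end

section
/- Let d ≥ 1, m > 2, and β_j, γ_j > 0 for j = 1,…,d. Suppose φ : ℝ → ℝ is twice continuously differentiable and convex, with φ(0) = 0, φ'(0) = 0, φ''(0) > 0, and lim_{x→+∞} φ'(x)/x^{2/m} = m(m−1)^{1/m−1}, lim_{x→−∞} φ'(x)/|x|^{2/m} = −m(m−1)^{1/m−1}. Define ϖ̃(x) := Σ_{j=1}^d β_j φ(γ_j x_j). Then the quantity sup over 1 ≤ i ≤ d and x ∈ ℝ^d \ {0} of |x_i ∂_i ϖ̃(x)|/ϖ̃(x) + |∂_i ϖ̃(x)|/|x| + |∂_i ϖ̃(x)|/(1+|x|^{2/m}) is finite. -/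
/-!
Everything reduces to one variable: `∂ᵢϖ̃(x) = βᵢγᵢφ'(γᵢxᵢ)`, `ϖ̃(x) ≥ βᵢφ(γᵢxᵢ)` and
`|xᵢ| ≤ |x|`, so it suffices to bound `|yφ'(y)|/φ(y)`, `|φ'(y)|/|y|` and
`|φ'(y)|/(1+|y|^{2/m})` on `ℝ`, and the reflection `y ↦ -y` reduces this to `y > 0`.
There each ratio is continuous, so only its behaviour at `0⁺` and `+∞` matters, where
`φ'(y) ≈ φ''(0) y` and `φ'(y) ≈ L y^{2/m}` with `L = m(m-1)^{1/m-1} > 0`. For the first ratio,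
convexity gives `φ(y) ≥ (y/2) φ'(y/2)`, which reduces it to the doubling ratio `φ'(y)/φ'(y/2)`,
tending to `2` at `0⁺` and to `2^{2/m}` at `+∞`.
-/

open Filter Topology Set

theorem exists_forall_le_of_continuousOn_Ioi {g : ℝ → ℝ} (hg : ContinuousOn g (Ioi 0))
    (h0 : IsBoundedUnder (· ≤ ·) (𝓝[>] 0) g) (htop : IsBoundedUnder (· ≤ ·) atTop g) :
    ∃ C, ∀ y, 0 < y → g y ≤ C := by
  obtain ⟨a, ha⟩ := h0
  obtain ⟨b, hb⟩ := htop
  obtain ⟨δ, hδ, hδa⟩ := mem_nhdsGT_iff_exists_Ioo_subset.mp ha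
  obtain ⟨M, hMb⟩ := eventually_atTop.mp hb
  obtain ⟨K, hK⟩ := isCompact_Icc.exists_bound_of_continuousOn
    (hg.mono fun y (hy : y ∈ Icc δ M) => lt_of_lt_of_le hδ hy.1)
  refine ⟨max a (max b K), fun y hy => ?_⟩
  rcases lt_or_ge y δ with hyδ | hδy
  · exact (hδa ⟨hy, hyδ⟩).trans (le_max_left _ _)
  rcases le_or_gt M y with hMy | hyM
  · exact (hMb y hMy).trans (le_max_of_le_right (le_max_left _ _))
  · exact (le_abs_self _).trans <|
      (hK y ⟨hδy, hyM.le⟩).trans (le_max_of_le_right (le_max_right _ _))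

theorem ConvexOn.add_deriv_mul_sub_le {f : ℝ → ℝ} (hf : ConvexOn ℝ univ f)
    (hd : Differentiable ℝ f) (a b : ℝ) : f a + deriv f a * (b - a) ≤ f b := by
  rcases lt_trichotomy a b with h | rfl | h
  · have h2 := hf.deriv_le_slope (mem_univ a) (mem_univ b) h (hd a)
    rw [slope_def_field, le_div_iff₀ (sub_pos.2 h)] at h2
    linarith
  · simp
  · have h2 := hf.slope_le_deriv (mem_univ b) (mem_univ a) h (hd a)
    rw [slope_def_field, div_le_iff₀ (sub_pos.2 h)] at h2
    linarith

theorem tendsto_div_two_nhdsGT_zero : Tendsto (fun y : ℝ => y / 2) (𝓝[>] 0) (𝓝[>] 0) := by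
  simpa using (continuous_id.div_const (2 : ℝ)).continuousWithinAt.tendsto_nhdsWithin
    (s := Ioi 0) (x := 0) (t := Ioi 0) fun y (hy : 0 < y) => half_pos hy

section PositiveHalfLine

variable {f : ℝ → ℝ} {c p L : ℝ}

theorem ConvexOn.nonneg_of_deriv_eq_zero (hf : ConvexOn ℝ univ f) (hd : Differentiable ℝ f)
    (h0 : f 0 = 0) (h'0 : deriv f 0 = 0) (y : ℝ) : 0 ≤ f y := by
  simpa [h0, h'0] using hf.add_deriv_mul_sub_le hd 0 y

theorem ConvexOn.mul_deriv_half_le (hf : ConvexOn ℝ univ f) (hd : Differentiable ℝ f)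
    (hnn : ∀ y, 0 ≤ f y) (y : ℝ) : y * deriv f (y / 2) / 2 ≤ f y := by
  have := hf.add_deriv_mul_sub_le hd (y / 2) y
  linarith [hnn (y / 2)]

theorem tendsto_deriv_div_nhdsGT (hd2 : HasDerivAt (deriv f) c 0) (h'0 : deriv f 0 = 0) :
    Tendsto (fun y => deriv f y / y) (𝓝[>] 0) (𝓝 c) := by
  simpa [h'0, div_eq_inv_mul] using hd2.tendsto_slope_zero_right

theorem deriv_pos_of_tendsto_deriv_div (hmono : Monotone (deriv f))
    (hslope : Tendsto (fun y => deriv f y / y) (𝓝[>] 0) (𝓝 c)) (hc : 0 < c) {y : ℝ}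
    (hy : 0 < y) : 0 < deriv f y := by
  obtain ⟨t, ht, hty⟩ := ((hslope.eventually (lt_mem_nhds hc)).and (Ioo_mem_nhdsGT hy)).exists
  exact (div_pos_iff_of_pos_right hty.1).1 ht |>.trans_le (hmono hty.2.le)

theorem tendsto_deriv_div_deriv_half_nhdsGT
    (hslope : Tendsto (fun y => deriv f y / y) (𝓝[>] 0) (𝓝 c)) (hc : c ≠ 0) :
    Tendsto (fun y => deriv f y / deriv f (y / 2)) (𝓝[>] 0) (𝓝 2) := by
  have h := ((hslope.div (hslope.comp tendsto_div_two_nhdsGT_zero) hc).const_mul 2)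
  rw [div_self hc, mul_one] at h
  refine h.congr' ?_
  filter_upwards [self_mem_nhdsWithin] with y (hy : 0 < y)
  rcases eq_or_ne (deriv f (y / 2)) 0 with h | h
  · simp [h]
  · simp only [Pi.div_apply, Function.comp_apply]
    field_simp

theorem tendsto_deriv_div_deriv_half_atTop
    (htop : Tendsto (fun y => deriv f y / y ^ p) atTop (𝓝 L)) (hL : L ≠ 0) :
    Tendsto (fun y => deriv f y / deriv f (y / 2)) atTop (𝓝 (2 ^ p)) := by
  have h := (htop.div (htop.comp (tendsto_id.atTop_div_const two_pos)) hL).const_mul (2 ^ p)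
  rw [div_self hL, mul_one] at h
  refine h.congr' ?_
  filter_upwards [eventually_gt_atTop 0] with y hy
  simp only [Pi.div_apply, Function.comp_apply, id]
  rw [Real.div_rpow hy.le zero_le_two]
  rcases eq_or_ne (deriv f (y / 2)) 0 with h | h
  · simp [h]
  · field_simp

theorem exists_deriv_le_mul_deriv_half (hcont : Continuous (deriv f))
    (hpos : ∀ y, 0 < y → 0 < deriv f y)
    (hslope : Tendsto (fun y => deriv f y / y) (𝓝[>] 0) (𝓝 c)) (hc : c ≠ 0)
    (htop : Tendsto (fun y => deriv f y / y ^ p) atTop (𝓝 L)) (hL : L ≠ 0) :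
    ∃ R, ∀ y, 0 < y → deriv f y ≤ R * deriv f (y / 2) := by
  obtain ⟨R, hR⟩ := exists_forall_le_of_continuousOn_Ioi
    (hcont.continuousOn.div (hcont.comp (continuous_id.div_const 2)).continuousOn
      fun y hy => (hpos _ (half_pos hy)).ne')
    (tendsto_deriv_div_deriv_half_nhdsGT hslope hc).isBoundedUnder_le
    (tendsto_deriv_div_deriv_half_atTop htop hL).isBoundedUnder_le
  exact ⟨R, fun y hy => (div_le_iff₀ (hpos _ (half_pos hy))).1 (hR y hy)⟩

theorem exists_deriv_le_mul_self (hcont : Continuous (deriv f))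
    (hnn : ∀ y, 0 < y → 0 ≤ deriv f y) (hp1 : p ≤ 1)
    (hslope : Tendsto (fun y => deriv f y / y) (𝓝[>] 0) (𝓝 c))
    (htop : Tendsto (fun y => deriv f y / y ^ p) atTop (𝓝 L)) :
    ∃ C, ∀ y, 0 < y → deriv f y ≤ C * y := by
  have hfar : (fun y => deriv f y / y) ≤ᶠ[atTop] fun y => deriv f y / y ^ p := by
    filter_upwards [eventually_ge_atTop 1] with y hy
    exact div_le_div_of_nonneg_left (hnn y (by linarith)) (by positivity)
      (Real.rpow_le_self_of_one_le hy hp1)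
  obtain ⟨C, hC⟩ := exists_forall_le_of_continuousOn_Ioi
    (hcont.continuousOn.div continuousOn_id fun y hy => ne_of_gt hy)
    hslope.isBoundedUnder_le (htop.isBoundedUnder_le.mono_le hfar)
  exact ⟨C, fun y hy => (div_le_iff₀ hy).1 (hC y hy)⟩

theorem exists_deriv_le_mul_one_add_rpow (hcont : Continuous (deriv f))
    (hnn : ∀ y, 0 < y → 0 ≤ deriv f y)
    (hslope : Tendsto (fun y => deriv f y / y) (𝓝[>] 0) (𝓝 c))
    (htop : Tendsto (fun y => deriv f y / y ^ p) atTop (𝓝 L)) :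
    ∃ C, ∀ y, 0 < y → deriv f y ≤ C * (1 + y ^ p) := by
  have hnear : (fun y => deriv f y / (1 + y ^ p)) ≤ᶠ[𝓝[>] 0] fun y => deriv f y / y := by
    filter_upwards [Ioo_mem_nhdsGT one_pos] with y hy
    exact div_le_div_of_nonneg_left (hnn y hy.1) hy.1
      (by linarith [hy.2, Real.rpow_nonneg hy.1.le p])
  have hfar : (fun y => deriv f y / (1 + y ^ p)) ≤ᶠ[atTop] fun y => deriv f y / y ^ p := by
    filter_upwards [eventually_gt_atTop 0] with y hy
    exact div_le_div_of_nonneg_left (hnn y hy) (by positivity) (by linarith)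
  obtain ⟨C, hC⟩ := exists_forall_le_of_continuousOn_Ioi
    (hcont.continuousOn.div (continuousOn_const.add
      (continuousOn_id.rpow_const fun y hy => Or.inl (ne_of_gt hy))) fun y hy =>
        (add_pos_of_pos_of_nonneg one_pos (Real.rpow_nonneg (le_of_lt hy) p)).ne')
    (hslope.isBoundedUnder_le.mono_le hnear) (htop.isBoundedUnder_le.mono_le hfar)
  exact ⟨C, fun y hy => (div_le_iff₀ (by positivity)).1 (hC y hy)⟩

/-- The three ratios of the theorem at `y`, cleared of their denominators so that the bounds
also make sense at `y = 0`. -/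
def DerivRatioBoundAt (f : ℝ → ℝ) (p C y : ℝ) : Prop :=
  |y * deriv f y| ≤ C * f y ∧ |deriv f y| ≤ C * |y| ∧ |deriv f y| ≤ C * (1 + |y| ^ p)

theorem DerivRatioBoundAt.mono {C C' y : ℝ} (h : DerivRatioBoundAt f p C y) (hfy : 0 ≤ f y)
    (hC : C ≤ C') : DerivRatioBoundAt f p C' y :=
  ⟨h.1.trans (mul_le_mul_of_nonneg_right hC hfy),
    h.2.1.trans (mul_le_mul_of_nonneg_right hC (abs_nonneg y)),
    h.2.2.trans (mul_le_mul_of_nonneg_right hC (by positivity))⟩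

theorem derivRatioBoundAt_comp_neg {C y : ℝ} :
    DerivRatioBoundAt (fun t => f (-t)) p C (-y) ↔ DerivRatioBoundAt f p C y := by
  simp [DerivRatioBoundAt, deriv_comp_neg]

theorem derivRatioBoundAt_zero {C : ℝ} (h0 : f 0 = 0) (h'0 : deriv f 0 = 0) (hC : 0 ≤ C) :
    DerivRatioBoundAt f p C 0 := by
  refine ⟨by simp [h0], by simp [h'0], by simp only [h'0, abs_zero]; positivity⟩

theorem exists_derivRatioBoundAt_of_pos (hf : ContDiff ℝ 2 f) (hconv : ConvexOn ℝ univ f)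
    (h0 : f 0 = 0) (h'0 : deriv f 0 = 0) (h''0 : 0 < deriv (deriv f) 0) (hp1 : p ≤ 1)
    (hL : 0 < L) (htop : Tendsto (fun y => deriv f y / y ^ p) atTop (𝓝 L)) :
    ∃ C, 0 ≤ C ∧ ∀ y, 0 < y → DerivRatioBoundAt f p C y := by
  have hd : Differentiable ℝ f := hf.differentiable (by norm_num)
  have hcont : Continuous (deriv f) := hf.continuous_deriv (by norm_num)
  have hd2 : HasDerivAt (deriv f) (deriv (deriv f) 0) 0 :=
    ((hf.deriv' (n := 1)).differentiable one_ne_zero 0).hasDerivAt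
  have hmono : Monotone (deriv f) := fun a b hab =>
    hconv.monotoneOn_deriv (fun x _ => hd x) (mem_univ a) (mem_univ b) hab
  have hslope := tendsto_deriv_div_nhdsGT hd2 h'0
  have hpos : ∀ y, 0 < y → 0 < deriv f y := fun y hy =>
    deriv_pos_of_tendsto_deriv_div hmono hslope h''0 hy
  have hnn : ∀ y, 0 < y → 0 ≤ deriv f y := fun y hy => (hpos y hy).le
  have hfnn := hconv.nonneg_of_deriv_eq_zero hd h0 h'0
  obtain ⟨R, hR⟩ := exists_deriv_le_mul_deriv_half hcont hpos hslope h''0.ne' htop hL.ne'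
  obtain ⟨C₁, hC₁⟩ := exists_deriv_le_mul_self hcont hnn hp1 hslope htop
  obtain ⟨C₂, hC₂⟩ := exists_deriv_le_mul_one_add_rpow hcont hnn hslope htop
  have hR0 : 0 ≤ R :=
    (pos_of_mul_pos_left ((hpos 1 one_pos).trans_le (hR 1 one_pos)) (hnn _ one_half_pos)).le
  refine ⟨max (2 * R) (max C₁ C₂), le_max_of_le_left (by positivity), fun y hy => ?_⟩
  have hd0 := hpos y hy
  refine ⟨?_, ?_, ?_⟩
  · rw [abs_of_pos (mul_pos hy hd0)]
    calc y * deriv f y ≤ y * (R * deriv f (y / 2)) := mul_le_mul_of_nonneg_left (hR y hy) hy.le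
      _ = 2 * R * (y * deriv f (y / 2) / 2) := by ring
      _ ≤ 2 * R * f y :=
        mul_le_mul_of_nonneg_left (hconv.mul_deriv_half_le hd hfnn y) (by positivity)
      _ ≤ _ := mul_le_mul_of_nonneg_right (le_max_left _ _) (hfnn y)
  · rw [abs_of_pos hd0, abs_of_pos hy]
    exact (hC₁ y hy).trans (mul_le_mul_of_nonneg_right (le_max_of_le_right (le_max_left _ _)) hy.le)
  · rw [abs_of_pos hd0, abs_of_pos hy]
    exact (hC₂ y hy).trans
      (mul_le_mul_of_nonneg_right (le_max_of_le_right (le_max_right _ _)) (by positivity))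

end PositiveHalfLine

section WholeLine

variable {f : ℝ → ℝ} {p L : ℝ}

theorem exists_derivRatioBoundAt_of_neg (hf : ContDiff ℝ 2 f) (hconv : ConvexOn ℝ univ f)
    (h0 : f 0 = 0) (h'0 : deriv f 0 = 0) (h''0 : 0 < deriv (deriv f) 0) (hp1 : p ≤ 1)
    (hL : 0 < L) (hbot : Tendsto (fun y => deriv f y / |y| ^ p) atBot (𝓝 (-L))) :
    ∃ C, 0 ≤ C ∧ ∀ y, y < 0 → DerivRatioBoundAt f p C y := by
  have hderiv : deriv (fun t => f (-t)) = fun t => -deriv f (-t) :=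
    funext fun t => deriv_comp_neg f t
  have htop : Tendsto (fun y => deriv (fun t => f (-t)) y / y ^ p) atTop (𝓝 L) := by
    have h := (hbot.comp tendsto_neg_atTop_atBot).neg
    rw [neg_neg] at h
    refine h.congr' ?_
    filter_upwards [eventually_gt_atTop 0] with y hy
    simp [hderiv, abs_of_pos hy, neg_div]
  obtain ⟨C, hC0, hC⟩ := exists_derivRatioBoundAt_of_pos (f := fun t => f (-t))
    (hf.comp contDiff_neg) (hconv.comp_linearMap (-LinearMap.id)) (by simpa using h0)
    (by simp [hderiv, h'0]) (by simpa [hderiv, deriv_comp_neg (deriv f)] using h''0) hp1 hL htop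
  refine ⟨C, hC0, fun y hy => ?_⟩
  simpa using derivRatioBoundAt_comp_neg.1 (hC (-y) (neg_pos.2 hy))

theorem exists_derivRatioBoundAt (hf : ContDiff ℝ 2 f) (hconv : ConvexOn ℝ univ f)
    (h0 : f 0 = 0) (h'0 : deriv f 0 = 0) (h''0 : 0 < deriv (deriv f) 0) (hp1 : p ≤ 1)
    (hL : 0 < L) (htop : Tendsto (fun y => deriv f y / y ^ p) atTop (𝓝 L))
    (hbot : Tendsto (fun y => deriv f y / |y| ^ p) atBot (𝓝 (-L))) :
    ∃ C, 0 ≤ C ∧ ∀ y, DerivRatioBoundAt f p C y := by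
  obtain ⟨Cpos, hCpos0, hCpos⟩ := exists_derivRatioBoundAt_of_pos hf hconv h0 h'0 h''0 hp1 hL htop
  obtain ⟨Cneg, -, hCneg⟩ := exists_derivRatioBoundAt_of_neg hf hconv h0 h'0 h''0 hp1 hL hbot
  have hfnn := hconv.nonneg_of_deriv_eq_zero (hf.differentiable (by norm_num)) h0 h'0
  have hC0 : 0 ≤ max Cpos Cneg := le_max_of_le_left hCpos0
  refine ⟨max Cpos Cneg, hC0, fun y => ?_⟩
  rcases lt_trichotomy y 0 with hy | rfl | hy
  · exact (hCneg y hy).mono (hfnn y) (le_max_right _ _)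
  · exact derivRatioBoundAt_zero h0 h'0 hC0
  · exact (hCpos y hy).mono (hfnn y) (le_max_left _ _)

end WholeLine

section Separable

variable {d : ℕ} {β γ : Fin d → ℝ} {φ : ℝ → ℝ} {C p : ℝ}

theorem fderiv_sum_mul_comp_mul_apply_single (hφ : Differentiable ℝ φ) (x : Fin d → ℝ)
    (i : Fin d) :
    fderiv ℝ (fun x : Fin d → ℝ => ∑ j, β j * φ (γ j * x j)) x (Pi.single i 1)
      = β i * γ i * deriv φ (γ i * x i) := by
  have h : ∀ j, HasFDerivAt (fun x : Fin d → ℝ => β j * φ (γ j * x j))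
      (β j • deriv φ (γ j * x j) • γ j • (ContinuousLinearMap.proj j : (Fin d → ℝ) →L[ℝ] ℝ)) x :=
    fun j => ((hφ _).hasDerivAt.comp_hasFDerivAt x ((hasFDerivAt_apply (𝕜 := ℝ)
      (F' := fun _ : Fin d => ℝ) j x).const_mul (γ j))).const_mul (β j)
  rw [(HasFDerivAt.fun_sum fun j _ => h j).fderiv]
  simp [Pi.single_apply]
  ring

theorem abs_le_sqrt_sum_sq (x : Fin d → ℝ) (i : Fin d) : |x i| ≤ √(∑ k, x k ^ 2) :=
  Real.abs_le_sqrt (Finset.single_le_sum (fun k _ => sq_nonneg (x k)) (Finset.mem_univ i))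

theorem abs_mul_div_sum_mul_comp_le (hβ : ∀ j, 0 ≤ β j) (hφ : ∀ y, 0 ≤ φ y) (hC : 0 ≤ C)
    (hbound : ∀ y, |y * deriv φ y| ≤ C * φ y) (x : Fin d → ℝ) (i : Fin d) :
    |x i * (β i * γ i * deriv φ (γ i * x i))| / ∑ j, β j * φ (γ j * x j) ≤ C := by
  have hterm : ∀ j, 0 ≤ β j * φ (γ j * x j) := fun j => mul_nonneg (hβ j) (hφ _)
  refine div_le_of_le_mul₀ (Finset.sum_nonneg fun j _ => hterm j) hC ?_
  calc |x i * (β i * γ i * deriv φ (γ i * x i))|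
      = β i * |γ i * x i * deriv φ (γ i * x i)| := by
        rw [show x i * (β i * γ i * deriv φ (γ i * x i))
          = β i * (γ i * x i * deriv φ (γ i * x i)) by ring, abs_mul, abs_of_nonneg (hβ i)]
    _ ≤ C * (β i * φ (γ i * x i)) := by
        rw [mul_left_comm]
        exact mul_le_mul_of_nonneg_left (hbound _) (hβ i)
    _ ≤ C * ∑ j, β j * φ (γ j * x j) :=
        mul_le_mul_of_nonneg_left (Finset.single_le_sum (fun j _ => hterm j)
          (Finset.mem_univ i)) hC

theorem abs_mul_deriv_div_sqrt_le (hβ : ∀ j, 0 ≤ β j) (hγ : ∀ j, 0 ≤ γ j) (hC : 0 ≤ C)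
    (hbound : ∀ y, |deriv φ y| ≤ C * |y|) (x : Fin d → ℝ) (i : Fin d) :
    |β i * γ i * deriv φ (γ i * x i)| / √(∑ k, x k ^ 2) ≤ β i * γ i ^ 2 * C := by
  have hβγ := mul_nonneg (hβ i) (hγ i)
  refine div_le_of_le_mul₀ (Real.sqrt_nonneg _) (mul_nonneg (mul_nonneg (hβ i) (sq_nonneg _)) hC) ?_
  calc |β i * γ i * deriv φ (γ i * x i)| = β i * γ i * |deriv φ (γ i * x i)| := by
        rw [abs_mul, abs_of_nonneg hβγ]
    _ ≤ β i * γ i * (C * (γ i * |x i|)) := by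
        refine mul_le_mul_of_nonneg_left ((hbound _).trans_eq ?_) hβγ
        rw [abs_mul, abs_of_nonneg (hγ i)]
    _ ≤ β i * γ i * (C * (γ i * √(∑ k, x k ^ 2))) := by
        gcongr
        · exact hγ i
        · exact abs_le_sqrt_sum_sq x i
    _ = β i * γ i ^ 2 * C * √(∑ k, x k ^ 2) := by ring

theorem one_add_abs_mul_rpow_le {a b s : ℝ} (ha : 0 ≤ a) (hb : |b| ≤ s) (hp : 0 ≤ p) :
    1 + |a * b| ^ p ≤ max 1 (a ^ p) * (1 + s ^ p) := by
  rw [abs_mul, abs_of_nonneg ha, Real.mul_rpow ha (abs_nonneg b), mul_one_add]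
  refine add_le_add (by simp) ?_
  exact mul_le_mul (le_max_right _ _) (Real.rpow_le_rpow (abs_nonneg b) hb hp)
      (by positivity) (zero_le_one.trans (le_max_left _ _))

theorem abs_mul_deriv_div_one_add_rpow_le (hβ : ∀ j, 0 ≤ β j) (hγ : ∀ j, 0 ≤ γ j)
    (hC : 0 ≤ C) (hp : 0 ≤ p) (hbound : ∀ y, |deriv φ y| ≤ C * (1 + |y| ^ p))
    (x : Fin d → ℝ) (i : Fin d) :
    |β i * γ i * deriv φ (γ i * x i)| / (1 + √(∑ k, x k ^ 2) ^ p)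
      ≤ β i * γ i * max 1 (γ i ^ p) * C := by
  have hβγ := mul_nonneg (hβ i) (hγ i)
  refine div_le_of_le_mul₀ (by positivity) (by positivity) ?_
  calc |β i * γ i * deriv φ (γ i * x i)| = β i * γ i * |deriv φ (γ i * x i)| := by
        rw [abs_mul, abs_of_nonneg hβγ]
    _ ≤ β i * γ i * (C * (max 1 (γ i ^ p) * (1 + √(∑ k, x k ^ 2) ^ p))) := by
        gcongr
        exact (hbound _).trans (mul_le_mul_of_nonneg_left
          (one_add_abs_mul_rpow_le (hγ i) (abs_le_sqrt_sum_sq x i) hp) hC)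
    _ = _ := by ring

end Separable

theorem stmt6_general (d : ℕ) (m : ℝ) (hm : 2 < m) (β γ : Fin d → ℝ)
    (hβ : ∀ j, 0 < β j) (hγ : ∀ j, 0 < γ j) (φ : ℝ → ℝ)
    (hC2 : ContDiff ℝ 2 φ) (hconv : ConvexOn ℝ Set.univ φ)
    (hφ0 : φ 0 = 0) (hφ'0 : deriv φ 0 = 0) (hφ''0 : 0 < deriv (deriv φ) 0)
    (htop : Tendsto (fun x => deriv φ x / x ^ (2 / m)) atTop
      (𝓝 (m * (m - 1) ^ (1 / m - 1))))
    (hbot : Tendsto (fun x => deriv φ x / |x| ^ (2 / m)) atBot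
      (𝓝 (-(m * (m - 1) ^ (1 / m - 1))))) :
    let w : (Fin d → ℝ) → ℝ := fun x => ∑ j, β j * φ (γ j * x j)
    ∃ C : ℝ, ∀ (i : Fin d) (x : Fin d → ℝ), x ≠ 0 →
      |x i * fderiv ℝ w x (Pi.single i 1)| / w x
        + |fderiv ℝ w x (Pi.single i 1)| / Real.sqrt (∑ k, x k ^ 2)
        + |fderiv ℝ w x (Pi.single i 1)| / (1 + Real.sqrt (∑ k, x k ^ 2) ^ (2 / m)) ≤ C := by
  intro w
  have hd : Differentiable ℝ φ := hC2.differentiable (by norm_num)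
  have hβ0 : ∀ j, 0 ≤ β j := fun j => (hβ j).le
  have hγ0 : ∀ j, 0 ≤ γ j := fun j => (hγ j).le
  have hp : 0 ≤ 2 / m := by positivity
  obtain ⟨C, hC0, hC⟩ := exists_derivRatioBoundAt hC2 hconv hφ0 hφ'0 hφ''0
    (div_le_one_of_le₀ hm.le (by positivity))
    (mul_pos (by positivity) (Real.rpow_pos_of_pos (by linarith) _)) htop hbot
  obtain ⟨B, hB⟩ := Finite.exists_le fun i =>
    C + β i * γ i ^ 2 * C + β i * γ i * max 1 (γ i ^ (2 / m)) * C
  refine ⟨B, fun i x _ => ?_⟩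
  rw [show fderiv ℝ w x (Pi.single i 1) = β i * γ i * deriv φ (γ i * x i) from
    fderiv_sum_mul_comp_mul_apply_single hd x i]
  refine le_trans ?_ (hB i)
  gcongr
  · exact abs_mul_div_sum_mul_comp_le hβ0
      (hconv.nonneg_of_deriv_eq_zero hd hφ0 hφ'0) hC0 (fun y => (hC y).1) x i
  · exact abs_mul_deriv_div_sqrt_le hβ0 hγ0 hC0 (fun y => (hC y).2.1) x i
  · exact abs_mul_deriv_div_one_add_rpow_le hβ0 hγ0 hC0 hp (fun y => (hC y).2.2) x i

/-- Derivative-ratio bounds for the separable solution of the reduced multidimensional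
first corrector equation. -/
theorem stmt6 (d : ℕ) (hd : 1 ≤ d) (m : ℝ) (hm : 2 < m) (β γ : Fin d → ℝ)
    (hβ : ∀ j, 0 < β j) (hγ : ∀ j, 0 < γ j) (φ : ℝ → ℝ)
    (hC2 : ContDiff ℝ 2 φ) (hconv : ConvexOn ℝ Set.univ φ)
    (hφ0 : φ 0 = 0) (hφ'0 : deriv φ 0 = 0) (hφ''0 : 0 < deriv (deriv φ) 0)
    (htop : Tendsto (fun x => deriv φ x / x ^ (2 / m)) atTop
      (𝓝 (m * (m - 1) ^ (1 / m - 1))))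
    (hbot : Tendsto (fun x => deriv φ x / |x| ^ (2 / m)) atBot
      (𝓝 (-(m * (m - 1) ^ (1 / m - 1))))) :
    let w : (Fin d → ℝ) → ℝ := fun x => ∑ j, β j * φ (γ j * x j)
    ∃ C : ℝ, ∀ (i : Fin d) (x : Fin d → ℝ), x ≠ 0 →
      |x i * fderiv ℝ w x (Pi.single i 1)| / w x
        + |fderiv ℝ w x (Pi.single i 1)| / Real.sqrt (∑ k, x k ^ 2)
        + |fderiv ℝ w x (Pi.single i 1)| / (1 + Real.sqrt (∑ k, x k ^ 2) ^ (2 / m)) ≤ C :=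
  stmt6_general d m hm β γ hβ hγ φ hC2 hconv hφ0 hφ'0 hφ''0 htop hbot
end

section
/- In the Black–Scholes setting, let d ≥ 1, μ ∈ ℝ^d, r ∈ ℝ, A := σσ^⊤ positive definite, R ∈ (0,1), q := (μ−r𝟙)^⊤A^{−1}(μ−r𝟙), π := (1/R)A^{−1}(μ−r𝟙), m > 2, m^* := 1/(3m−2), β := 3mm^* − R, λ > 0, T > 0, and let g : [0,T] → (0,∞) be continuous and ḡ : [0,T] → ℝ be differentiable. Set V⁰_w(t,w,s) := g(t)w^{−R}, h⁰(t,w,s) := (π_1 w/s_1, …, π_d w/s_d), Ũ'(y) := −y^{−1/R}, and define u(t,w,s) := λ w^β ḡ(t). Then u satisfies −E₂(t,w,s, ∂_t u, ∂_w u, ∂_s u, ∂²_{ww}u, ∂²_{ws}u, ∂²_{ss}u) = λ g(t) w^β for all (t,w,s) ∈ [0,T]×(0,∞)×(0,∞)^d if and only if ḡ'(t) + ḡ(t)[−β g(t)^{−1/R} + β r + (β/R + β(β−1)/(2R²)) q] = −g(t) for all t ∈ [0,T]. -/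
/-!
The ansatz `u = λ w^β ḡ(t)` does not depend on `s`, so every `s`-derivative in `E₂` vanishes.
Since `h⁰ × s = w π` with `A π = (μ - r𝟙) / R`, the two Merton terms are `(w / R) q` and
`(w / R)² q`, and the inverse marginal utility at `V⁰_w = g w^{-R}` is `-g^{-1/R} w`. Hence every
term of `E₂(u)` is `λ w^β` times a function of `t` alone, the coefficient being the left-hand side
of the ODE, and one divides by `λ w^β > 0`.
-/

open Matrix

section
variable {n : Type*} [Fintype n]

lemma sum_sum_mul_mul_eq_dotProduct_mulVec (x y : n → ℝ) (M : Matrix n n ℝ) :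
    ∑ i, ∑ j, x i * M i j * y j = x ⬝ᵥ (M *ᵥ y) := by
  simp only [dotProduct, mulVec, Finset.mul_sum, mul_assoc]

variable [DecidableEq n] {A : Matrix n n ℝ} (b : n → ℝ) (c w : ℝ)

lemma mul_sum_inv_mul_mul_eq_smul_inv_mulVec (i : n) :
    (c * ∑ j, A⁻¹ i j * b j) * w = ((c * w) • A⁻¹ *ᵥ b) i := by
  simp only [mulVec, dotProduct, Pi.smul_apply, smul_eq_mul]
  ring

lemma sum_mul_inv_mulVec_mul :
    ∑ i, (c * ∑ j, A⁻¹ i j * b j) * w * b i = c * w * ∑ i, ∑ j, b i * A⁻¹ i j * b j := by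
  rw [sum_sum_mul_mul_eq_dotProduct_mulVec, dotProduct_comm, ← smul_eq_mul, ← smul_dotProduct]
  simp only [dotProduct, mul_sum_inv_mul_mul_eq_smul_inv_mulVec]

lemma sum_sum_mul_inv_mulVec_mul_mul (hA : IsUnit A.det) :
    ∑ i, ∑ j, (c * ∑ k, A⁻¹ i k * b k) * w * A i j * ((c * ∑ k, A⁻¹ j k * b k) * w)
      = (c * w) ^ 2 * ∑ i, ∑ j, b i * A⁻¹ i j * b j := by
  simp only [mul_sum_inv_mul_mul_eq_smul_inv_mulVec, sum_sum_mul_mul_eq_dotProduct_mulVec]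
  rw [mulVec_smul, mulVec_mulVec, mul_nonsing_inv A hA, one_mulVec, smul_dotProduct,
    dotProduct_smul, dotProduct_comm, smul_eq_mul, smul_eq_mul]
  ring

end

lemma deriv_mul_rpow_mul (a β c : ℝ) {w : ℝ} (hw : w ≠ 0) :
    deriv (fun ω : ℝ => a * ω ^ β * c) w = a * β * w ^ (β - 1) * c := by
  rw [(((Real.hasDerivAt_rpow_const (Or.inl hw)).const_mul a).mul_const c).deriv]
  ring

lemma deriv_deriv_mul_rpow_mul (a β c : ℝ) {w : ℝ} (hw : 0 < w) :
    deriv (deriv fun ω : ℝ => a * ω ^ β * c) w = a * β * (β - 1) * w ^ (β - 2) * c := by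
  have hderiv : deriv (fun ω : ℝ => a * ω ^ β * c) =ᶠ[nhds w]
      fun ω => a * β * ω ^ (β - 1) * c := by
    filter_upwards [eventually_ne_nhds hw.ne'] with ω hω
    exact deriv_mul_rpow_mul a β c hω
  rw [hderiv.deriv_eq, deriv_mul_rpow_mul _ _ _ hw.ne']
  ring_nf

lemma mul_rpow_neg_rpow_neg_one_div {a w R : ℝ} (ha : 0 ≤ a) (hw : 0 ≤ w) (hR : R ≠ 0) :
    (a * w ^ (-R)) ^ (-(1 / R)) = a ^ (-(1 / R)) * w := by
  rw [Real.mul_rpow ha (Real.rpow_nonneg hw _), ← Real.rpow_mul hw,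
    show -R * -(1 / R) = 1 by field_simp, Real.rpow_one]

lemma forall_mem_forall_pos_iff {ι : Type*} {S : Set ℝ} {P : ℝ → ℝ → (ι → ℝ) → Prop}
    {Q : ℝ → Prop} (h : ∀ t ∈ S, ∀ w, 0 < w → ∀ s : ι → ℝ, (∀ i, 0 < s i) → (P t w s ↔ Q t)) :
    (∀ t ∈ S, ∀ w, 0 < w → ∀ s : ι → ℝ, (∀ i, 0 < s i) → P t w s) ↔ ∀ t ∈ S, Q t :=
  ⟨fun hP t ht => (h t ht 1 one_pos 1 fun _ => one_pos).mp (hP t ht 1 one_pos 1 fun _ => one_pos),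
    fun hQ t ht w hw s hs => (h t ht w hw s hs).mpr (hQ t ht)⟩

theorem stmt7_general (d : ℕ) (μ : Fin d → ℝ) (r : ℝ)
    (A : Matrix (Fin d) (Fin d) ℝ) (hA : A.PosDef)
    (R m lam T : ℝ) (hR : R ∈ Set.Ioo (0 : ℝ) 1)
    (hlam : 0 < lam)
    (g gbar : ℝ → ℝ)
    (hgpos : ∀ t ∈ Set.Icc (0 : ℝ) T, 0 < g t) :
    let mstar : ℝ := 1 / (3 * m - 2)
    let β : ℝ := 3 * m * mstar - R
    let q : ℝ := ∑ i, ∑ j, (μ i - r) * A⁻¹ i j * (μ j - r)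
    let piv : Fin d → ℝ := fun i => (1 / R) * ∑ j, A⁻¹ i j * (μ j - r)
    let u : ℝ → ℝ → (Fin d → ℝ) → ℝ := fun t w _ => lam * w ^ β * gbar t
    let h0 : ℝ → (Fin d → ℝ) → Fin d → ℝ := fun w s i => piv i * w / s i
    ((∀ t ∈ Set.Icc (0 : ℝ) T, ∀ w : ℝ, 0 < w → ∀ s : Fin d → ℝ, (∀ i, 0 < s i) →
        -(deriv (fun ω => u t ω s) w * (∑ i, h0 w s i * s i * (μ i - r))
          + (∑ i, ∑ j, (deriv (fun ω => fderiv ℝ (fun σ => u t ω σ) s (Pi.single i 1)) w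
              * s i * h0 w s i) * A i j * s j)
          + deriv (deriv (fun ω => u t ω s)) w / 2 *
              (∑ i, ∑ j, (h0 w s i * s i) * A i j * (h0 w s j * s j))
          + deriv (fun τ => u τ w s) t
          + (∑ i, fderiv ℝ (fun σ => u t w σ) s (Pi.single i 1) * s i * μ i)
          + r * w * deriv (fun ω => u t ω s) w
          + (1 / 2) * ∑ i, ∑ j, A i j * s i * s j *
              fderiv ℝ (fun σ => fderiv ℝ (fun σ' => u t w σ') σ (Pi.single j 1)) s
                (Pi.single i 1)
          + (-((g t * w ^ (-R)) ^ (-(1 / R)))) * deriv (fun ω => u t ω s) w)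
        = lam * g t * w ^ β)
      ↔
      (∀ t ∈ Set.Icc (0 : ℝ) T,
        deriv gbar t + gbar t * (-(β * g t ^ (-(1 / R))) + β * r
          + (β / R + β * (β - 1) / (2 * R ^ 2)) * q) = -(g t))) := by
  intro mstar β q piv u h0
  refine forall_mem_forall_pos_iff fun t ht w hw s hs => ?_
  have hlin : ∑ i, piv i * w * (μ i - r) = 1 / R * w * q :=
    sum_mul_inv_mulVec_mul (fun j => μ j - r) _ w
  have hquad : ∑ i, ∑ j, piv i * w * A i j * (piv j * w) = (1 / R * w) ^ 2 * q :=
    sum_sum_mul_inv_mulVec_mul_mul (fun j => μ j - r) _ w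
      (isUnit_iff_ne_zero.mpr hA.det_pos.ne')
  simp only [u, h0, div_mul_cancel₀ _ (hs _).ne']
  rw [deriv_mul_rpow_mul _ _ _ hw.ne', deriv_deriv_mul_rpow_mul _ _ _ hw, deriv_const_mul_field',
    mul_rpow_neg_rpow_neg_one_div (hgpos t ht).le hw.le hR.1.ne']
  simp only [fderiv_const_apply, _root_.zero_apply, deriv_const,
    zero_mul, mul_zero, Finset.sum_const_zero, add_zero, hlin, hquad]
  -- in terms of `w ^ (β - 2)` both sides are polynomial, so `linear_combination` applies
  have hβ1 : w ^ (β - 1) = w ^ (β - 2) * w := by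
    rw [← Real.rpow_add_one hw.ne']; ring_nf
  have hβ : w ^ β = w ^ (β - 2) * w * w := by
    rw [← hβ1, ← Real.rpow_add_one hw.ne']; ring_nf
  have hne : lam * (w ^ (β - 2) * w * w) ≠ 0 := by positivity
  rw [hβ1, hβ]
  constructor
  · intro h
    apply mul_left_cancel₀ hne
    linear_combination -h
  · intro h
    linear_combination -(lam * (w ^ (β - 2) * w * w)) * h

/-- In the Black–Scholes example, the candidate `u(t,w,s) = λ w^β ḡ(t)` solves the second
corrector equation `−E₂(u) = λ g(t) w^β` if and only if `ḡ` solves the associated linear ODE. -/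
theorem stmt7 (d : ℕ) (hd : 1 ≤ d) (μ : Fin d → ℝ) (r : ℝ)
    (A : Matrix (Fin d) (Fin d) ℝ) (hA : A.PosDef)
    (R m lam T : ℝ) (hR : R ∈ Set.Ioo (0 : ℝ) 1) (hm : 2 < m)
    (hlam : 0 < lam) (hT : 0 < T)
    (g gbar : ℝ → ℝ) (hgcont : ContinuousOn g (Set.Icc 0 T))
    (hgpos : ∀ t ∈ Set.Icc (0 : ℝ) T, 0 < g t)
    (hgbar : Differentiable ℝ gbar) :
    let mstar : ℝ := 1 / (3 * m - 2)
    let β : ℝ := 3 * m * mstar - R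
    let q : ℝ := ∑ i, ∑ j, (μ i - r) * A⁻¹ i j * (μ j - r)
    let piv : Fin d → ℝ := fun i => (1 / R) * ∑ j, A⁻¹ i j * (μ j - r)
    let u : ℝ → ℝ → (Fin d → ℝ) → ℝ := fun t w _ => lam * w ^ β * gbar t
    let h0 : ℝ → (Fin d → ℝ) → Fin d → ℝ := fun w s i => piv i * w / s i
    ((∀ t ∈ Set.Icc (0 : ℝ) T, ∀ w : ℝ, 0 < w → ∀ s : Fin d → ℝ, (∀ i, 0 < s i) →
        -(deriv (fun ω => u t ω s) w * (∑ i, h0 w s i * s i * (μ i - r))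
          + (∑ i, ∑ j, (deriv (fun ω => fderiv ℝ (fun σ => u t ω σ) s (Pi.single i 1)) w
              * s i * h0 w s i) * A i j * s j)
          + deriv (deriv (fun ω => u t ω s)) w / 2 *
              (∑ i, ∑ j, (h0 w s i * s i) * A i j * (h0 w s j * s j))
          + deriv (fun τ => u τ w s) t
          + (∑ i, fderiv ℝ (fun σ => u t w σ) s (Pi.single i 1) * s i * μ i)
          + r * w * deriv (fun ω => u t ω s) w
          + (1 / 2) * ∑ i, ∑ j, A i j * s i * s j *
              fderiv ℝ (fun σ => fderiv ℝ (fun σ' => u t w σ') σ (Pi.single j 1)) s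
                (Pi.single i 1)
          + (-((g t * w ^ (-R)) ^ (-(1 / R)))) * deriv (fun ω => u t ω s) w)
        = lam * g t * w ^ β)
      ↔
      (∀ t ∈ Set.Icc (0 : ℝ) T,
        deriv gbar t + gbar t * (-(β * g t ^ (-(1 / R))) + β * r
          + (β / R + β * (β - 1) / (2 * R ^ 2)) * q) = -(g t))) :=
  stmt7_general d μ r A hA R m lam T hR hlam g gbar hgpos
end

section
/- Let d ≥ 1, m > 2, m^* := 1/(3m−2), R ∈ (0,1), λ > 0, T > 0. Let g, ḡ : [0,T] → ℝ be continuous with 0 < g₋ ≤ g(t) ≤ g₊ and 0 ≤ ḡ(t) ≤ ḡ₊ for all t ∈ [0,T]. Let 𝔖 be a symmetric positive definite d×d real matrix, let π ∈ ℝ^d satisfy π_i > 0 for all i and Σ_{i=1}^d π_i < 1, and let ϖ̃ : ℝ^d → [0,∞) be continuously differentiable with ϖ̃(x) ≤ C₀|x|^{1+2/m} and |∇ϖ̃(x)| ≤ C₀|x|^{2/m} for all x ∈ ℝ^d, for some C₀ > 0. For ε ∈ (0,1] define ψ^ε(t,w,s,h) := g(t) w^{1−R}/(1−R) − (wε)^{2m^*}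 λ w^{1−R} ḡ(t) − (wε)^{4m^*} λ g(t) w^{1−R} ϖ̃((wε)^{−m^*} 𝔖((h×s)/w − π)) and u(t,w,s) := λ w^{1−R+2m^*} ḡ(t). Then there exists c_W > 0 such that for every ε ∈ (0,1] and every (t,w,s,h) ∈ [0,T]×(0,∞)×(0,∞)^d×ℝ^d with h_i > 0 for all i and Σ_{i=1}^d s_i h_i/w < 1, one has 1 − c_W (wε)^{1/m} ≤ (∂_w ψ^ε(t,w,s,h) + ε^{2m^*} ∂_w u(t,w,s))/(g(t) w^{−R}) ≤ 1 + c_W (wε)^{1/m}, and 1 − c_W ((wε)^{2m^*} + (wε)^{1/m}) ≤ ∂_w ψ^ε(t,w,s,h)/(g(t) w^{−R}) ≤ 1 + c_W ((wε)^{2m^*} + (wε)^{1/m}). -/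
/-!
Differentiating in `w`, the `ḡ`-term of `∂_w ψ^ε` is exactly `-ε^{2m*} ∂_w u`, so both ratios
are `1` minus the contribution `e` of the `ϖ̃`-term, the second one also minus
`λ (ḡ/g) (2m* + 1 - R) (wε)^{2m*} ∈ [0, C (wε)^{2m*}]`. On the admissible region the weights
`h_i s_i / w` and `π_i` lie in `[0, 1]`, so the rescaled displacement
`Y = (wε)^{-m*} 𝔖((h×s)/w - π)` and `w ∂_w Y` both have Euclidean length `O((wε)^{-m*})`.
The growth bounds on `ϖ̃` and `∇ϖ̃` then give
`|e| = O((wε)^{4m*} ((wε)^{-m*})^{1 + 2/m}) = O((wε)^{1/m})`.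
-/

open Real Finset Matrix

section Sums

variable {ι : Type*} [Fintype ι]

lemma mem_Icc_of_sum_le_one {f : ι → ℝ} (h0 : ∀ i, 0 ≤ f i) (h1 : ∑ i, f i ≤ 1) (i : ι) :
    f i ∈ Set.Icc (0 : ℝ) 1 :=
  ⟨h0 i, (single_le_sum (fun j _ => h0 j) (mem_univ i)).trans h1⟩

lemma sqrt_sum_sq_le_sum_abs (x : ι → ℝ) : √(∑ i, x i ^ 2) ≤ ∑ i, |x i| := by
  rw [sqrt_le_left (by positivity)]
  calc ∑ i, x i ^ 2 = ∑ i, |x i| ^ 2 := by simp_rw [sq_abs]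
    _ ≤ (∑ i, |x i|) ^ 2 := sum_sq_le_sq_sum_of_nonneg fun i _ => abs_nonneg _

lemma abs_apply_le_sqrt_mul_sqrt [DecidableEq ι] (L : (ι → ℝ) →L[ℝ] ℝ) (v : ι → ℝ) :
    |L v| ≤ √(∑ i, L (Pi.single i 1) ^ 2) * √(∑ i, v i ^ 2) := by
  have hL : L v = ∑ i, L (Pi.single i 1) * v i := by
    conv_lhs => rw [pi_eq_sum_univ' v]
    simp [map_sum, mul_comm]
  rw [hL, ← sqrt_mul (by positivity)]
  exact abs_le_sqrt (sum_mul_sq_le_sq_mul_sq _ _ _)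

lemma sqrt_sum_sq_mul_mulVec_le {κ : Type*} [Fintype κ] (S : Matrix κ ι ℝ) {c r : ℝ}
    (hc : 0 ≤ c) {z : ι → ℝ} (hz : ∀ j, |z j| ≤ r) :
    √(∑ k, (c * (S *ᵥ z) k) ^ 2) ≤ c * (r * ∑ k, ∑ j, |S k j|) := by
  have hrow : ∀ k, |(S *ᵥ z) k| ≤ r * ∑ j, |S k j| := fun k => by
    calc |(S *ᵥ z) k| ≤ ∑ j, |S k j| * |z j| := by
          simpa only [mulVec, dotProduct, abs_mul] using
            abs_sum_le_sum_abs (fun j => S k j * z j) univ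
      _ ≤ ∑ j, |S k j| * r :=
          sum_le_sum fun j _ => mul_le_mul_of_nonneg_left (hz j) (abs_nonneg _)
      _ = r * ∑ j, |S k j| := by rw [← sum_mul, mul_comm]
  calc √(∑ k, (c * (S *ᵥ z) k) ^ 2) ≤ ∑ k, |c * (S *ᵥ z) k| := sqrt_sum_sq_le_sum_abs _
    _ = c * ∑ k, |(S *ᵥ z) k| := by simp only [abs_mul, abs_of_nonneg hc, mul_sum]
    _ ≤ c * (r * ∑ k, ∑ j, |S k j|) := by
        rw [mul_sum univ (fun k => ∑ j, |S k j|) r]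
        exact mul_le_mul_of_nonneg_left (sum_le_sum fun k _ => hrow k) hc

end Sums

lemma hasDerivAt_mul_const_rpow (p : ℝ) {ε w : ℝ} (hε : 0 < ε) (hw : 0 < w) :
    HasDerivAt (fun ω => (ω * ε) ^ p) (p * (w * ε) ^ p / w) w := by
  have hb : w * ε ≠ 0 := (mul_pos hw hε).ne'
  refine ((hasDerivAt_rpow_const (p := p) (Or.inl hb)).comp w
    ((hasDerivAt_id w).mul_const ε)).congr_deriv ?_
  rw [rpow_sub_one hb]
  field_simp

lemma hasDerivAt_mul_const_rpow_mul_rpow (p r : ℝ) {ε w : ℝ} (hε : 0 < ε) (hw : 0 < w) :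
    HasDerivAt (fun ω => (ω * ε) ^ p * ω ^ r) ((p + r) * ((w * ε) ^ p * w ^ r) / w) w := by
  refine ((hasDerivAt_mul_const_rpow p hε hw).mul
    (hasDerivAt_rpow_const (p := r) (Or.inl hw.ne'))).congr_deriv ?_
  rw [rpow_sub_one hw.ne']
  field_simp

section Displacement

variable {ι κ : Type*} [Fintype ι]

/-- The paper's `(ωε)^{-a} 𝔖((h × s)/ω - π)`, with `x = h × s` and `θ = π`. -/
noncomputable def displacement (S : Matrix κ ι ℝ) (θ x : ι → ℝ) (a ε ω : ℝ) : κ → ℝ :=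
  fun k => (ω * ε) ^ (-a) * (S *ᵥ fun i => x i / ω - θ i) k

noncomputable def displacementEulerDeriv (S : Matrix κ ι ℝ) (θ x : ι → ℝ) (a ε w : ℝ) : κ → ℝ :=
  fun k => (w * ε) ^ (-a) * (S *ᵥ fun i => -(a * (x i / w - θ i)) - x i / w) k

lemma hasDerivAt_displacement (S : Matrix κ ι ℝ) (θ x : ι → ℝ) (a : ℝ) {ε w : ℝ}
    (hε : 0 < ε) (hw : 0 < w) :
    HasDerivAt (displacement S θ x a ε)
      (w⁻¹ • displacementEulerDeriv S θ x a ε w) w := by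
  refine hasDerivAt_pi.2 fun k => ?_
  have hmv : HasDerivAt (fun ω => (S *ᵥ fun i => x i / ω - θ i) k)
      (∑ j, S k j * ((0 * w - x j * 1) / w ^ 2)) w := by
    simp only [mulVec, dotProduct]
    exact HasDerivAt.fun_sum fun j _ =>
      (((hasDerivAt_const w (x j)).div (hasDerivAt_id w) hw.ne').sub_const (θ j)).const_mul _
  refine ((hasDerivAt_mul_const_rpow (-a) hε hw).mul hmv).congr_deriv ?_
  simp only [displacementEulerDeriv, Pi.smul_apply, smul_eq_mul, mulVec, dotProduct, mul_sum,
    ← sum_add_distrib]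
  refine sum_congr rfl fun j _ => ?_
  field_simp
  ring

lemma sqrt_sum_sq_displacement_le [Fintype κ] (S : Matrix κ ι ℝ) {θ x : ι → ℝ} {a ε w : ℝ}
    (ha : a ∈ Set.Icc (0 : ℝ) 1) (hb : 0 < w * ε) (hx : ∀ i, x i / w ∈ Set.Icc (0 : ℝ) 1)
    (hθ : ∀ i, θ i ∈ Set.Icc (0 : ℝ) 1) :
    √(∑ k, displacement S θ x a ε w k ^ 2) ≤ (w * ε) ^ (-a) * (2 * ∑ k, ∑ j, |S k j|) ∧
      √(∑ k, displacementEulerDeriv S θ x a ε w k ^ 2) ≤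
        (w * ε) ^ (-a) * (2 * ∑ k, ∑ j, |S k j|) := by
  have hc : 0 ≤ (w * ε) ^ (-a) := rpow_nonneg hb.le _
  have hv : ∀ i, |x i / w - θ i| ≤ 1 := fun i => by
    obtain ⟨hx0, hx1⟩ := hx i
    obtain ⟨hθ0, hθ1⟩ := hθ i
    exact abs_sub_le_iff.2 ⟨by linarith, by linarith⟩
  refine ⟨sqrt_sum_sq_mul_mulVec_le S hc fun i => (hv i).trans one_le_two,
    sqrt_sum_sq_mul_mulVec_le S hc fun i => ?_⟩
  calc |-(a * (x i / w - θ i)) - x i / w| ≤ a * |x i / w - θ i| + |x i / w| := by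
        simpa [abs_mul, abs_of_nonneg ha.1] using abs_sub (-(a * (x i / w - θ i))) (x i / w)
    _ ≤ 1 * 1 + 1 := by
        gcongr
        · exact ha.2
        · exact hv i
        · exact abs_le.2 ⟨by linarith [(hx i).1], (hx i).2⟩
    _ = 2 := by norm_num

end Displacement

section Growth

variable {ι : Type*} [Fintype ι] [DecidableEq ι]

lemma abs_mul_add_fderiv_le {F : (ι → ℝ) → ℝ} {C p : ℝ} (hC : 0 ≤ C) (hp : 0 ≤ p)
    (hFnn : ∀ y, 0 ≤ F y) (hF : ∀ y, F y ≤ C * √(∑ i, y i ^ 2) ^ (1 + p))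
    (hF' : ∀ y, √(∑ i, fderiv ℝ F y (Pi.single i 1) ^ 2) ≤ C * √(∑ i, y i ^ 2) ^ p)
    {α r : ℝ} (hα : 0 ≤ α) {y z : ι → ℝ} (hy : √(∑ i, y i ^ 2) ≤ r)
    (hz : √(∑ i, z i ^ 2) ≤ r) :
    |α * F y + fderiv ℝ F y z| ≤ (α + 1) * (C * r ^ (1 + p)) := by
  have hr : 0 ≤ r := (sqrt_nonneg _).trans hy
  have hval : |F y| ≤ C * r ^ (1 + p) := by
    rw [abs_of_nonneg (hFnn y)]
    exact (hF y).trans (by gcongr)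
  have hder : |fderiv ℝ F y z| ≤ C * r ^ (1 + p) :=
    calc |fderiv ℝ F y z|
        ≤ √(∑ i, fderiv ℝ F y (Pi.single i 1) ^ 2) * √(∑ i, z i ^ 2) :=
          abs_apply_le_sqrt_mul_sqrt _ _
      _ ≤ C * r ^ p * r := by
          gcongr
          exact (hF' y).trans (by gcongr)
      _ = C * r ^ (1 + p) := by rw [rpow_add' hr (by linarith), rpow_one]; ring
  calc |α * F y + fderiv ℝ F y z| ≤ α * |F y| + |fderiv ℝ F y z| := by
        simpa [abs_mul, abs_of_nonneg hα] using abs_add_le (α * F y) (fderiv ℝ F y z)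
    _ ≤ (α + 1) * (C * r ^ (1 + p)) := by nlinarith

end Growth

/-- `4 m* - m* (1 + 2 / m) = 1 / m`: this fixes `m* = 1 / (3 m - 2)`. -/
lemma rpow_four_mul_mul_rpow_neg {m a : ℝ} (hm : 2 < m) (ha : a = 1 / (3 * m - 2)) {b K : ℝ}
    (hb : 0 < b) (hK : 0 ≤ K) :
    b ^ (4 * a) * (b ^ (-a) * K) ^ (1 + 2 / m) = K ^ (1 + 2 / m) * b ^ (1 / m) := by
  have h3m : 3 * m - 2 ≠ 0 := by linarith
  rw [mul_rpow (rpow_nonneg hb.le _) hK, ← rpow_mul hb.le, ← mul_assoc, ← rpow_add hb, mul_comm,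
    ha]
  congr 2
  field_simp
  ring

section Expansion

variable {ι : Type*} [Fintype ι]

/-- `ψ^ε(t, ω, s, h)`, with `g(t)`, `ḡ(t)`, `ϖ̃`, `h × s` and `π` written `G`, `Gb`, `F`, `x`
and `θ`. -/
noncomputable def expansion (S : Matrix ι ι ℝ) (θ x : ι → ℝ) (F : (ι → ℝ) → ℝ)
    (G Gb lam R a ε ω : ℝ) : ℝ :=
  G * ω ^ (1 - R) / (1 - R) - (ω * ε) ^ (2 * a) * lam * ω ^ (1 - R) * Gb
    - (ω * ε) ^ (4 * a) * lam * G * ω ^ (1 - R) * F (displacement S θ x a ε ω)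

/-- `w ^ (-c) * w * ∂_w (w ^ c * F (displacement ⋯ w))` with `c = 4 * a + (1 - R)`. -/
noncomputable def expansionRemainder (S : Matrix ι ι ℝ) (θ x : ι → ℝ) (F : (ι → ℝ) → ℝ)
    (R a ε w : ℝ) : ℝ :=
  (4 * a + (1 - R)) * F (displacement S θ x a ε w)
    + fderiv ℝ F (displacement S θ x a ε w) (displacementEulerDeriv S θ x a ε w)

lemma hasDerivAt_expansion (S : Matrix ι ι ℝ) (θ x : ι → ℝ) {F : (ι → ℝ) → ℝ}
    (hF : Differentiable ℝ F) (G Gb lam R a : ℝ) (hR : R ≠ 1) {ε w : ℝ} (hε : 0 < ε)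
    (hw : 0 < w) :
    HasDerivAt (expansion S θ x F G Gb lam R a ε)
      (w ^ (1 - R) / w * (G - lam * Gb * (2 * a + (1 - R)) * (w * ε) ^ (2 * a)
        - lam * G * (w * ε) ^ (4 * a) * expansionRemainder S θ x F R a ε w)) w := by
  have hY := (hF _).hasFDerivAt.comp_hasDerivAt w (hasDerivAt_displacement S θ x a hε hw)
  have h1 := ((hasDerivAt_rpow_const (p := 1 - R) (Or.inl hw.ne')).const_mul G).div_const (1 - R)
  have h2 := (hasDerivAt_mul_const_rpow_mul_rpow (2 * a) (1 - R) hε hw).mul_const (lam * Gb)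
  have h3 :=
    ((hasDerivAt_mul_const_rpow_mul_rpow (4 * a) (1 - R) hε hw).mul hY).mul_const (lam * G)
  refine (((h1.sub h2).sub h3).congr_of_eventuallyEq
    (Filter.Eventually.of_forall fun ω => by
      simp only [expansion, Pi.sub_apply, Pi.mul_apply, Function.comp_apply]
      ring)).congr_deriv ?_
  have h1R : 1 - R ≠ 0 := sub_ne_zero.2 hR.symm
  simp only [expansionRemainder, Function.comp_apply, map_smul, smul_eq_mul, rpow_sub_one hw.ne']
  field_simp

lemma deriv_expansion_div (S : Matrix ι ι ℝ) (θ x : ι → ℝ) {F : (ι → ℝ) → ℝ}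
    (hF : Differentiable ℝ F) {G : ℝ} (Gb lam R a : ℝ) (hG : G ≠ 0) (hR : R ≠ 1) {ε w : ℝ}
    (hε : 0 < ε) (hw : 0 < w) :
    (deriv (expansion S θ x F G Gb lam R a ε) w
        + ε ^ (2 * a) * deriv (fun ω => lam * ω ^ (1 - R + 2 * a) * Gb) w) / (G * w ^ (-R)) =
        1 - lam * (w * ε) ^ (4 * a) * expansionRemainder S θ x F R a ε w ∧
      deriv (expansion S θ x F G Gb lam R a ε) w / (G * w ^ (-R)) =
        1 - lam * (Gb / G) * (2 * a + (1 - R)) * (w * ε) ^ (2 * a)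
          - lam * (w * ε) ^ (4 * a) * expansionRemainder S θ x F R a ε w := by
  have hψ := (hasDerivAt_expansion S θ x hF G Gb lam R a hR hε hw).deriv
  have hu := ((hasDerivAt_rpow_const (p := 1 - R + 2 * a) (Or.inl hw.ne')).const_mul lam
    |>.mul_const Gb).deriv
  have hwR : w ^ (-R) = w ^ (1 - R) / w := by rw [← rpow_sub_one hw.ne']; ring_nf
  have hεu : ε ^ (2 * a) * (lam * ((1 - R + 2 * a) * w ^ (1 - R + 2 * a - 1)) * Gb) =
      lam * Gb * (2 * a + (1 - R)) * (w * ε) ^ (2 * a) * (w ^ (1 - R) / w) := by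
    rw [mul_rpow hw.le hε.le, rpow_sub_one hw.ne', rpow_add hw]
    ring
  have hP : w ^ (1 - R) / w ≠ 0 := by positivity
  rw [hψ, hu, hεu, hwR]
  constructor
  · field_simp
    ring
  · field_simp

lemma abs_expansion_error_le [DecidableEq ι] (S : Matrix ι ι ℝ) {θ x : ι → ℝ}
    {F : (ι → ℝ) → ℝ} {C₀ m : ℝ} (hC₀ : 0 ≤ C₀) (hm : 2 < m) (hFnn : ∀ y, 0 ≤ F y)
    (hF : ∀ y, F y ≤ C₀ * √(∑ i, y i ^ 2) ^ (1 + 2 / m))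
    (hF' : ∀ y, √(∑ i, fderiv ℝ F y (Pi.single i 1) ^ 2) ≤ C₀ * √(∑ i, y i ^ 2) ^ (2 / m))
    {a R lam : ℝ} (ha : a = 1 / (3 * m - 2)) (hR : R ≤ 1) (hlam : 0 ≤ lam) {ε w : ℝ}
    (hε : 0 < ε) (hw : 0 < w) (hx : ∀ i, x i / w ∈ Set.Icc (0 : ℝ) 1)
    (hθ : ∀ i, θ i ∈ Set.Icc (0 : ℝ) 1) :
    |lam * (w * ε) ^ (4 * a) * expansionRemainder S θ x F R a ε w| ≤
      lam * (4 * a + (1 - R) + 1) * (C₀ * (2 * ∑ k, ∑ j, |S k j|) ^ (1 + 2 / m)) *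
        (w * ε) ^ (1 / m) := by
  have hb : 0 < w * ε := mul_pos hw hε
  have h3m : 0 < 3 * m - 2 := by linarith
  have ha0 : 0 ≤ a := by rw [ha]; positivity
  have ha1 : a ≤ 1 := by rw [ha, div_le_one h3m]; linarith
  have hS : 0 ≤ 2 * ∑ k, ∑ j, |S k j| := by positivity
  obtain ⟨hY, hZ⟩ := sqrt_sum_sq_displacement_le S ⟨ha0, ha1⟩ hb hx hθ
  have hE := abs_mul_add_fderiv_le hC₀ (by positivity) hFnn hF hF'
    (by linarith : 0 ≤ 4 * a + (1 - R)) hY hZ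
  rw [abs_mul, abs_of_nonneg (by positivity : 0 ≤ lam * (w * ε) ^ (4 * a))]
  calc lam * (w * ε) ^ (4 * a) * |expansionRemainder S θ x F R a ε w|
      ≤ lam * (w * ε) ^ (4 * a) * ((4 * a + (1 - R) + 1) *
          (C₀ * ((w * ε) ^ (-a) * (2 * ∑ k, ∑ j, |S k j|)) ^ (1 + 2 / m))) :=
        mul_le_mul_of_nonneg_left hE (by positivity)
    _ = _ := by
        linear_combination (lam * (4 * a + (1 - R) + 1) * C₀) *
          rpow_four_mul_mul_rpow_neg hm ha hb hS

end Expansion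

lemma mul_div_mul_mem_Icc {lam c G Gb gminus gbarplus B : ℝ} (hlam : 0 ≤ lam) (hc : 0 ≤ c)
    (hB : 0 ≤ B) (hgminus : 0 < gminus) (hG : gminus ≤ G) (hGb : 0 ≤ Gb) (hGb' : Gb ≤ gbarplus) :
    lam * (Gb / G) * c * B ∈ Set.Icc 0 (lam * c * gbarplus / gminus * B) := by
  have hGb'' : Gb / G ≤ gbarplus / gminus := by gcongr; linarith
  refine ⟨by have := div_nonneg hGb (hgminus.trans_le hG).le; positivity, ?_⟩
  calc lam * (Gb / G) * c * B ≤ lam * (gbarplus / gminus) * c * B := by gcongr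
    _ = lam * c * gbarplus / gminus * B := by ring

lemma one_sub_bounds {e q B₁ B₂ K Kb : ℝ} (he : |e| ≤ K * B₁) (hq₀ : 0 ≤ q) (hq : q ≤ Kb * B₂)
    (hB₁ : 0 ≤ B₁) (hB₂ : 0 ≤ B₂) (hK : 0 ≤ K) (hKb : 0 ≤ Kb) :
    (1 - (K + Kb + 1) * B₁ ≤ 1 - e ∧ 1 - e ≤ 1 + (K + Kb + 1) * B₁) ∧
      (1 - (K + Kb + 1) * (B₂ + B₁) ≤ 1 - q - e ∧ 1 - q - e ≤ 1 + (K + Kb + 1) * (B₂ + B₁)) := by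
  obtain ⟨he₁, he₂⟩ := abs_le.1 he
  refine ⟨⟨?_, ?_⟩, ?_, ?_⟩ <;> nlinarith [mul_nonneg hKb hB₁, mul_nonneg hK hB₂]

theorem stmt15_general (d : ℕ) (m R lam T : ℝ) (hm : 2 < m)
    (hR : R ∈ Set.Ioo (0 : ℝ) 1) (hlam : 0 < lam) (hT : 0 < T)
    (g gbar : ℝ → ℝ)
    (gminus gplus gbarplus : ℝ) (hgminus : 0 < gminus)
    (hgb : ∀ t ∈ Set.Icc (0 : ℝ) T, gminus ≤ g t ∧ g t ≤ gplus)
    (hgbarb : ∀ t ∈ Set.Icc (0 : ℝ) T, 0 ≤ gbar t ∧ gbar t ≤ gbarplus)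
    (S : Matrix (Fin d) (Fin d) ℝ)
    (piv : Fin d → ℝ) (hpiv : ∀ i, 0 < piv i) (hpivsum : ∑ i, piv i < 1)
    (tw : (Fin d → ℝ) → ℝ) (htw : ContDiff ℝ 1 tw) (htwnn : ∀ x, 0 ≤ tw x)
    (C₀ : ℝ) (hC₀ : 0 < C₀)
    (htwgrowth : ∀ x : Fin d → ℝ,
      tw x ≤ C₀ * Real.sqrt (∑ i, x i ^ 2) ^ (1 + 2 / m))
    (htwgrad : ∀ x : Fin d → ℝ,
      Real.sqrt (∑ i, (fderiv ℝ tw x (Pi.single i 1)) ^ 2) ≤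
        C₀ * Real.sqrt (∑ i, x i ^ 2) ^ (2 / m)) :
    let mstar : ℝ := 1 / (3 * m - 2)
    let ψ : ℝ → ℝ → ℝ → (Fin d → ℝ) → (Fin d → ℝ) → ℝ := fun ε t w s h =>
      g t * w ^ (1 - R) / (1 - R) - (w * ε) ^ (2 * mstar) * lam * w ^ (1 - R) * gbar t
        - (w * ε) ^ (4 * mstar) * lam * g t * w ^ (1 - R) *
            tw (fun k => (w * ε) ^ (-mstar) *
              S.mulVec (fun i => h i * s i / w - piv i) k)
    let u : ℝ → ℝ → ℝ := fun t w => lam * w ^ (1 - R + 2 * mstar) * gbar t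
    ∃ cW : ℝ, 0 < cW ∧ ∀ ε ∈ Set.Ioc (0 : ℝ) 1, ∀ t ∈ Set.Icc (0 : ℝ) T,
      ∀ w : ℝ, 0 < w → ∀ s : Fin d → ℝ, (∀ i, 0 < s i) → ∀ h : Fin d → ℝ,
        (∀ i, 0 < h i) → (∑ i, s i * h i / w) < 1 →
        (1 - cW * (w * ε) ^ (1 / m) ≤
            (deriv (fun ω => ψ ε t ω s h) w + ε ^ (2 * mstar) * deriv (fun ω => u t ω) w) /
              (g t * w ^ (-R)) ∧
          (deriv (fun ω => ψ ε t ω s h) w + ε ^ (2 * mstar) * deriv (fun ω => u t ω) w) /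
              (g t * w ^ (-R)) ≤
            1 + cW * (w * ε) ^ (1 / m)) ∧
        (1 - cW * ((w * ε) ^ (2 * mstar) + (w * ε) ^ (1 / m)) ≤
            deriv (fun ω => ψ ε t ω s h) w / (g t * w ^ (-R)) ∧
          deriv (fun ω => ψ ε t ω s h) w / (g t * w ^ (-R)) ≤
            1 + cW * ((w * ε) ^ (2 * mstar) + (w * ε) ^ (1 / m))) := by
  intro mstar ψ u
  have hmstar : 0 ≤ mstar := one_div_nonneg.2 (by linarith)
  have h1R : 0 ≤ 1 - R := by linarith [hR.2]
  have hgbarplus : 0 ≤ gbarplus :=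
    (hgbarb 0 ⟨le_rfl, hT.le⟩).1.trans (hgbarb 0 ⟨le_rfl, hT.le⟩).2
  set K := lam * (4 * mstar + (1 - R) + 1) * (C₀ * (2 * ∑ k, ∑ j, |S k j|) ^ (1 + 2 / m))
  set Kb := lam * (2 * mstar + (1 - R)) * gbarplus / gminus
  have hK : 0 ≤ K := by positivity
  have hKb : 0 ≤ Kb := by positivity
  refine ⟨K + Kb + 1, by positivity, fun ε hε t ht w hw s hs h hh hsum => ?_⟩
  have hb : 0 < w * ε := mul_pos hw hε.1
  have hgt : 0 < g t := hgminus.trans_le (hgb t ht).1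
  have hx : ∀ i, h i * s i / w ∈ Set.Icc (0 : ℝ) 1 := mem_Icc_of_sum_le_one
    (fun i => (div_pos (mul_pos (hh i) (hs i)) hw).le) (by simpa only [mul_comm] using hsum.le)
  have hθ : ∀ i, piv i ∈ Set.Icc (0 : ℝ) 1 :=
    mem_Icc_of_sum_le_one (fun i => (hpiv i).le) hpivsum.le
  obtain ⟨hq₀, hq⟩ := mul_div_mul_mem_Icc hlam.le (by positivity : 0 ≤ 2 * mstar + (1 - R))
    (rpow_nonneg hb.le (2 * mstar)) hgminus (hgb t ht).1 (hgbarb t ht).1 (hgbarb t ht).2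
  have he := abs_expansion_error_le S hC₀.le hm htwnn htwgrowth htwgrad rfl hR.2.le hlam.le hε.1
    hw hx hθ
  have hbounds := one_sub_bounds he hq₀ hq (rpow_nonneg hb.le _) (rpow_nonneg hb.le _) hK hKb
  obtain ⟨hψu, hψ⟩ := deriv_expansion_div S piv (fun i => h i * s i)
    (htw.differentiable one_ne_zero) (gbar t) lam R mstar hgt.ne' hR.2.ne hε.1 hw
  rw [← hψu, ← hψ] at hbounds
  exact hbounds

/-- Uniform bounds on the `w`-derivative of the candidate expansion `ψ^ε` of the frictional
value function, on the admissible region, for small price impact. -/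
theorem stmt15 (d : ℕ) (hd : 1 ≤ d) (m R lam T : ℝ) (hm : 2 < m)
    (hR : R ∈ Set.Ioo (0 : ℝ) 1) (hlam : 0 < lam) (hT : 0 < T)
    (g gbar : ℝ → ℝ) (hgcont : ContinuousOn g (Set.Icc 0 T))
    (hgbarcont : ContinuousOn gbar (Set.Icc 0 T))
    (gminus gplus gbarplus : ℝ) (hgminus : 0 < gminus)
    (hgb : ∀ t ∈ Set.Icc (0 : ℝ) T, gminus ≤ g t ∧ g t ≤ gplus)
    (hgbarb : ∀ t ∈ Set.Icc (0 : ℝ) T, 0 ≤ gbar t ∧ gbar t ≤ gbarplus)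
    (S : Matrix (Fin d) (Fin d) ℝ) (hS : S.PosDef)
    (piv : Fin d → ℝ) (hpiv : ∀ i, 0 < piv i) (hpivsum : ∑ i, piv i < 1)
    (tw : (Fin d → ℝ) → ℝ) (htw : ContDiff ℝ 1 tw) (htwnn : ∀ x, 0 ≤ tw x)
    (C₀ : ℝ) (hC₀ : 0 < C₀)
    (htwgrowth : ∀ x : Fin d → ℝ,
      tw x ≤ C₀ * Real.sqrt (∑ i, x i ^ 2) ^ (1 + 2 / m))
    (htwgrad : ∀ x : Fin d → ℝ,
      Real.sqrt (∑ i, (fderiv ℝ tw x (Pi.single i 1)) ^ 2) ≤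
        C₀ * Real.sqrt (∑ i, x i ^ 2) ^ (2 / m)) :
    let mstar : ℝ := 1 / (3 * m - 2)
    let ψ : ℝ → ℝ → ℝ → (Fin d → ℝ) → (Fin d → ℝ) → ℝ := fun ε t w s h =>
      g t * w ^ (1 - R) / (1 - R) - (w * ε) ^ (2 * mstar) * lam * w ^ (1 - R) * gbar t
        - (w * ε) ^ (4 * mstar) * lam * g t * w ^ (1 - R) *
            tw (fun k => (w * ε) ^ (-mstar) *
              S.mulVec (fun i => h i * s i / w - piv i) k)
    let u : ℝ → ℝ → ℝ := fun t w => lam * w ^ (1 - R + 2 * mstar) * gbar t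
    ∃ cW : ℝ, 0 < cW ∧ ∀ ε ∈ Set.Ioc (0 : ℝ) 1, ∀ t ∈ Set.Icc (0 : ℝ) T,
      ∀ w : ℝ, 0 < w → ∀ s : Fin d → ℝ, (∀ i, 0 < s i) → ∀ h : Fin d → ℝ,
        (∀ i, 0 < h i) → (∑ i, s i * h i / w) < 1 →
        (1 - cW * (w * ε) ^ (1 / m) ≤
            (deriv (fun ω => ψ ε t ω s h) w + ε ^ (2 * mstar) * deriv (fun ω => u t ω) w) /
              (g t * w ^ (-R)) ∧
          (deriv (fun ω => ψ ε t ω s h) w + ε ^ (2 * mstar) * deriv (fun ω => u t ω) w) /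
              (g t * w ^ (-R)) ≤
            1 + cW * (w * ε) ^ (1 / m)) ∧
        (1 - cW * ((w * ε) ^ (2 * mstar) + (w * ε) ^ (1 / m)) ≤
            deriv (fun ω => ψ ε t ω s h) w / (g t * w ^ (-R)) ∧
          deriv (fun ω => ψ ε t ω s h) w / (g t * w ^ (-R)) ≤
            1 + cW * ((w * ε) ^ (2 * mstar) + (w * ε) ^ (1 / m))) :=
  stmt15_general d m R lam T hm hR hlam hT g gbar gminus gplus gbarplus hgminus hgb hgbarb S piv
    hpiv hpivsum tw htw htwnn C₀ hC₀ htwgrowth htwgrad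
end
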